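/- arXiv:2308.10469 — 7 statements merged into one kernel-verified Lean document; each statement's English description precedes it below -/
import Mathlib

section
/- Let D = (D_1,...,D_n) be a diagram (each D_j ⊆ {1,...,n}) and C = (C_1,...,C_n) with C_j ≤ D_j in the Gale order for all j. For a flagged filling F of D with content C (a choice of bijections F_j : D_j → C_j with F_j(d) ≤ d for all d ∈ D_j and all j), define its weight wt(F) = (f_1,...,f_n) where f_i = Σ_{j : i ∈ D_j} F_j(i) is the sum of the entries in row i. Then there is a unique flagged filling F_max of D with content C whose weight is strictly maximal in lexicographic order: wt(F_max) > wt(F) (lexicographically) for every flagged filling F ≠ F_max. -/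
open Finset

/-- The Gale order on finite subsets of `Fin n` (for equal cardinalities):
`C ≤ D` iff they have the same cardinality and the `i`-th smallest element of `C`
is at most the `i`-th smallest element of `D` for every `i`. -/
def Gale {n : ℕ} (C D : Finset (Fin n)) : Prop :=
  ∃ h : C.card = D.card, ∀ i : Fin C.card,
    C.orderEmbOfFin rfl i ≤ D.orderEmbOfFin h.symm i

/-- The generic `n × n` upper-triangular matrix `Y`, with entry `y_{ij}` (an
indeterminate) when `i ≤ j` and `0` below the diagonal. -/
noncomputable def Ygen (n : ℕ) : Matrix (Fin n) (Fin n) (MvPolynomial (Fin n × Fin n) ℂ) :=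
  fun i j => if i ≤ j then MvPolynomial.X (i, j) else 0

/-- `det (Y^R_S)`: the determinant of the submatrix of `Y` with rows indexed by `R`
(in increasing order) and columns indexed by `S` (in increasing order); by convention,
`0` if the cardinalities differ. -/
noncomputable def colDet {n : ℕ} (R S : Finset (Fin n)) : MvPolynomial (Fin n × Fin n) ℂ :=
  if h : R.card = S.card then
    Matrix.det (Matrix.of fun a b : Fin R.card =>
      Ygen n (R.orderEmbOfFin rfl a) (S.orderEmbOfFin h.symm b))
  else 0

/-- A flagged filling of a diagram `D = (D_1,…,D_n)` with content `C = (C_1,…,C_n)`: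
for each column `j`, a bijection `F j : D_j → C_j` with `F j d ≤ d`. -/
def FlaggedD {n : ℕ} {D C : Fin n → Finset (Fin n)}
    (F : ∀ j, {x // x ∈ D j} ≃ {x // x ∈ C j}) : Prop :=
  ∀ j, ∀ d : {x // x ∈ D j}, ((F j) d : Fin n) ≤ (d : Fin n)

/-- The weight of a flagged filling: `wt F i` is the sum of the entries (as elements of
`{1,…,n}`, i.e. `val + 1`) placed in row `i`. -/
def wt {n : ℕ} {D C : Fin n → Finset (Fin n)}
    (F : ∀ j, {x // x ∈ D j} ≃ {x // x ∈ C j}) (i : Fin n) : ℕ :=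
  ∑ j : Fin n, if h : i ∈ D j then (((F j) ⟨i, h⟩ : Fin n) : ℕ) + 1 else 0

/-- Strict lexicographic comparison of weight vectors (row `1` most significant). -/
def LexGT {n : ℕ} (f g : Fin n → ℕ) : Prop :=
  ∃ i : Fin n, g i < f i ∧ ∀ t : Fin n, t < i → f t = g t

/-- The monomial `y^F = ∏_j ∏_{d ∈ D_j} y_{F_j(d), d}` of a flagged filling. -/
noncomputable def ymon {n : ℕ} {D C : Fin n → Finset (Fin n)}
    (F : ∀ j, {x // x ∈ D j} ≃ {x // x ∈ C j}) : MvPolynomial (Fin n × Fin n) ℂ :=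
  ∏ j : Fin n, ∏ d ∈ (D j).attach, MvPolynomial.X (((F j) d : Fin n), (d : Fin n))

section Aux

variable {n : ℕ}

/-- Column weight vector of a single column filling. -/
def colwt {Dj Cj : Finset (Fin n)} (E : {x // x ∈ Dj} ≃ {x // x ∈ Cj}) (i : Fin n) : ℕ :=
  if h : i ∈ Dj then (((E ⟨i, h⟩ : {x // x ∈ Cj}) : Fin n) : ℕ) + 1 else 0

lemma colwt_inj {Dj Cj : Finset (Fin n)} {E E' : {x // x ∈ Dj} ≃ {x // x ∈ Cj}}
    (h : colwt E = colwt E') : E = E' := by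
  apply Equiv.ext
  rintro ⟨d, hd⟩
  have h2 := congrFun h d
  simp only [colwt, hd, dif_pos] at h2
  exact Subtype.ext (Fin.ext (by omega))

lemma exists_flagged {Dj Cj : Finset (Fin n)} (hg : Gale Cj Dj) :
    ∃ E : {x // x ∈ Dj} ≃ {x // x ∈ Cj}, ∀ d, ((E d : Fin n)) ≤ (d : Fin n) := by
  obtain ⟨hc, hle⟩ := hg
  refine ⟨(Dj.orderIsoOfFin hc.symm).toEquiv.symm.trans (Cj.orderIsoOfFin rfl).toEquiv,
    fun d => ?_⟩
  set i := (Dj.orderIsoOfFin hc.symm).toEquiv.symm d with hi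
  have hd : ((Dj.orderIsoOfFin hc.symm) i : Fin n) = (d : Fin n) := by
    rw [hi]; simp
  calc ((Cj.orderIsoOfFin rfl i : {x // x ∈ Cj}) : Fin n)
      = Cj.orderEmbOfFin rfl i := Finset.coe_orderIsoOfFin_apply Cj rfl i
    _ ≤ Dj.orderEmbOfFin hc.symm i := hle i
    _ = ((Dj.orderIsoOfFin hc.symm) i : Fin n) :=
        (Finset.coe_orderIsoOfFin_apply Dj hc.symm i).symm
    _ = (d : Fin n) := hd

noncomputable instance (n : ℕ) : LinearOrder (Lex (Fin n → ℕ)) :=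
  @linearOrderOfSTO (Lex (Fin n → ℕ)) (· < ·)
    { trichotomous := (Pi.isTrichotomous_lex _ _ IsWellFounded.wf).1 } (Classical.decRel _)

lemma exists_col_max {Dj Cj : Finset (Fin n)} (hg : Gale Cj Dj) :
    ∃ E0 : {x // x ∈ Dj} ≃ {x // x ∈ Cj}, (∀ d, ((E0 d : Fin n)) ≤ (d : Fin n)) ∧
      ∀ E : {x // x ∈ Dj} ≃ {x // x ∈ Cj}, (∀ d, ((E d : Fin n)) ≤ (d : Fin n)) → E ≠ E0 →
        LexGT (colwt E0) (colwt E) := by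
  classical
  let T := {E : {x // x ∈ Dj} ≃ {x // x ∈ Cj} // ∀ d, ((E d : Fin n)) ≤ (d : Fin n)}
  have : Nonempty T := (exists_flagged hg).elim fun E hE => ⟨⟨E, hE⟩⟩
  obtain ⟨E0, hE0⟩ := Finite.exists_max (fun t : T => toLex (colwt t.1))
  refine ⟨E0.1, E0.2, fun E hE hne => ?_⟩
  have hle : toLex (colwt E) ≤ toLex (colwt E0.1) := hE0 ⟨E, hE⟩
  have hlt : toLex (colwt E) < toLex (colwt E0.1) := by
    refine lt_of_le_of_ne hle fun heq => hne ?_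
    exact colwt_inj (by exact_mod_cast heq)
  obtain ⟨i, hbefore, hi⟩ := hlt
  exact ⟨i, hi, fun t ht => (hbefore t ht).symm⟩

/-- Summing columnwise lex comparisons. -/
lemma lexGT_sum {f g : Fin n → Fin n → ℕ}
    (hle : ∀ j, g j = f j ∨ LexGT (f j) (g j)) (j₀ : Fin n) (hj₀ : g j₀ ≠ f j₀) :
    LexGT (fun i => ∑ j : Fin n, f j i) (fun i => ∑ j : Fin n, g j i) := by
  classical
  let S : Finset (Fin n) := Finset.univ.filter fun j => g j ≠ f j
  have hw : ∀ j : Fin n, ∃ i : Fin n, j ∈ S →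
      g j i < f j i ∧ ∀ t : Fin n, t < i → f j t = g j t := by
    intro j
    rcases hle j with h | h
    · exact ⟨j, fun hj => absurd h (by simpa [S] using hj)⟩
    · obtain ⟨i, h1, h2⟩ := h
      exact ⟨i, fun _ => ⟨h1, h2⟩⟩
  choose w hw' using hw
  have hw1 : ∀ j ∈ S, g j (w j) < f j (w j) := fun j hj => (hw' j hj).1
  have hw2 : ∀ j ∈ S, ∀ t : Fin n, t < w j → f j t = g j t := fun j hj => (hw' j hj).2
  have hj₀S : j₀ ∈ S := by simp [S, hj₀]
  have hS : (S.image w).Nonempty := ⟨w j₀, Finset.mem_image_of_mem w hj₀S⟩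
  obtain ⟨j₁, hj₁, hj₁w⟩ := Finset.mem_image.1 ((S.image w).min'_mem hS)
  have hwge : ∀ j ∈ S, (S.image w).min' hS ≤ w j :=
    fun j hj => Finset.min'_le _ _ (Finset.mem_image_of_mem w hj)
  have heq_col : ∀ j : Fin n, j ∉ S → g j = f j := by
    intro j hj
    by_contra hc
    exact hj (by simp [S, hc])
  refine ⟨(S.image w).min' hS, ?_, ?_⟩
  · -- strict at the minimum witness
    refine Finset.sum_lt_sum (fun j _ => ?_) ⟨j₁, Finset.mem_univ _, ?_⟩
    · by_cases hj : j ∈ S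
      · rcases lt_or_eq_of_le (hwge j hj) with hlt | heq
        · exact le_of_eq (hw2 j hj _ hlt).symm
        · exact le_of_lt (heq ▸ hw1 j hj)
      · exact le_of_eq (congrFun (heq_col j hj) _)
    · rw [← hj₁w]; exact hw1 j₁ hj₁
  · -- equality before it
    intro t ht
    refine Finset.sum_congr rfl fun j _ => ?_
    by_cases hj : j ∈ S
    · exact hw2 j hj t (lt_of_lt_of_le ht (hwge j hj))
    · exact (congrFun (heq_col j hj) t).symm

end Aux


/-- for diagrams `C ≤ D`, there is a unique flagged filling `Fmax` of `D`
with content `C` whose weight is strictly maximal in lexicographic order among all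
flagged fillings. -/
theorem exists_unique_max_weight_filling {n : ℕ} (D C : Fin n → Finset (Fin n))
    (h : ∀ j, Gale (C j) (D j)) :
    ∃ Fmax : ∀ j, {x // x ∈ D j} ≃ {x // x ∈ C j},
      FlaggedD Fmax ∧
      ∀ F : ∀ j, {x // x ∈ D j} ≃ {x // x ∈ C j},
        FlaggedD F → F ≠ Fmax → LexGT (wt Fmax) (wt F) := by
  classical
  choose Fm hFm1 hFm2 using fun j => exists_col_max (h j)
  refine ⟨Fm, hFm1, fun F hF hne => ?_⟩
  have hcols : ∀ j, colwt (F j) = colwt (Fm j) ∨ LexGT (colwt (Fm j)) (colwt (F j)) := by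
    intro j
    by_cases hj : F j = Fm j
    · exact Or.inl (by rw [hj])
    · exact Or.inr (hFm2 j (F j) (hF j) hj)
  obtain ⟨j₀, hj₀⟩ := Function.ne_iff.1 hne
  have hj₀' : colwt (F j₀) ≠ colwt (Fm j₀) := fun hc => hj₀ (colwt_inj hc)
  exact lexGT_sum (f := fun j => colwt (Fm j)) (g := fun j => colwt (F j)) hcols j₀ hj₀'
end

section
/- Let C ≤ D be diagrams in the n×n grid and let F_max be the flagged filling of D with content C of lexicographically maximal weight. Then the monomial y^{F_max} = Π_j Π_{d ∈ D_j} y_{(F_max)_j(d), d} appears with nonzero coefficient in the polynomial det(Y^C_D) = Π_{j=1}^n det(Y^{C_j}_{D_j}); in fact F_max is the unique flagged filling of D with content C whose monomial equals y^{F_max}, so its coefficient is ±1. -/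
open Finset

/-- `det(Y^C_D) = ∏_j det(Y^{C_j}_{D_j})` for diagrams `C ≤ D`. -/
noncomputable def diagDet {n : ℕ} (C D : Fin n → Finset (Fin n)) :
    MvPolynomial (Fin n × Fin n) ℂ :=
  ∏ j : Fin n, colDet (C j) (D j)

/-! The monomial `y^F` records, for each cell `(a, i)`, how many columns put the entry `a` in
row `i`, and the row weights `wt F i` are linear functions of these multiplicities. Hence two
fillings with the same monomial have the same weight, and lexicographic maximality makes `Fmax`
the only flagged filling with monomial `y^{Fmax}`. Expanding every `det(Y^{C_j}_{D_j})` by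
Leibniz's formula writes `det(Y^C_D)` as a signed sum of the monomials of tuples of bijections
`D_j → C_j`, the unflagged ones contributing `0` since `Y` is upper triangular; so the coefficient
of `y^{Fmax}` is the sign of `Fmax`. -/

theorem Finset.sum_attach_ite_coe_eq {α M : Type*} [AddCommMonoid M] [DecidableEq α]
    (s : Finset α) (a : α) (f : s → M) :
    ∑ x ∈ s.attach, (if (x : α) = a then f x else 0) =
      if h : a ∈ s then f ⟨a, h⟩ else 0 := by
  split_ifs with h
  · rw [Finset.sum_eq_single ⟨a, h⟩] <;> aesop
  · exact Finset.sum_eq_zero fun x _ => if_neg fun hx : (x : α) = a => h (hx ▸ x.2)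

open MvPolynomial

section Fillings

variable {n : ℕ} {C D : Fin n → Finset (Fin n)}

noncomputable def ymonExp (F : ∀ j, {x // x ∈ D j} ≃ {x // x ∈ C j}) :
    (Fin n × Fin n) →₀ ℕ :=
  ∑ j, ∑ d ∈ (D j).attach, Finsupp.single ((F j d : Fin n), (d : Fin n)) 1

theorem ymon_eq_monomial (F : ∀ j, {x // x ∈ D j} ≃ {x // x ∈ C j}) :
    ymon F = monomial (ymonExp F) 1 := by
  simp only [ymon, ymonExp, monomial_sum_one, X]

theorem ymonExp_eq_of_ymon_eq {F G : ∀ j, {x // x ∈ D j} ≃ {x // x ∈ C j}}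
    (h : ymon F = ymon G) : ymonExp F = ymonExp G :=
  monomial_left_injective one_ne_zero <| by
    simpa only [ymon_eq_monomial] using h

theorem wt_eq_sum_ymonExp (F : ∀ j, {x // x ∈ D j} ≃ {x // x ∈ C j}) (i : Fin n) :
    wt F i = ∑ a : Fin n, (a + 1) * ymonExp F (a, i) := by
  simp only [ymonExp, Finsupp.coe_finsetSum, Finset.sum_apply, Finsupp.single_apply,
    Prod.mk.injEq, Finset.mul_sum, wt]
  rw [Finset.sum_comm]
  refine Finset.sum_congr rfl fun j _ => ?_
  rw [Finset.sum_comm]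
  simp only [mul_ite, mul_one, mul_zero, ite_and, Finset.sum_ite_eq, Finset.mem_univ, if_true]
  exact (Finset.sum_attach_ite_coe_eq (D j) i fun d => ((F j d : Fin n) : ℕ) + 1).symm

theorem wt_eq_of_ymon_eq {F G : ∀ j, {x // x ∈ D j} ≃ {x // x ∈ C j}}
    (h : ymon F = ymon G) : wt F = wt G := by
  funext i
  rw [wt_eq_sum_ymonExp, wt_eq_sum_ymonExp, ymonExp_eq_of_ymon_eq h]

theorem eq_of_ymon_eq_of_lexGT {Fmax F : ∀ j, {x // x ∈ D j} ≃ {x // x ∈ C j}}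
    (hmax : ∀ F : ∀ j, {x // x ∈ D j} ≃ {x // x ∈ C j},
      FlaggedD F → F ≠ Fmax → LexGT (wt Fmax) (wt F))
    (hF : FlaggedD F) (h : ymon F = ymon Fmax) : F = Fmax := by
  by_contra hne
  obtain ⟨i, hlt, -⟩ := hmax F hF hne
  exact hlt.ne (congrFun (wt_eq_of_ymon_eq h) i)

/-- Through the increasing enumerations of `S` and `R`, which index the columns and rows of
`colDet R S`. -/
noncomputable def permEquivBij (R S : Finset (Fin n)) (h : R.card = S.card) :
    Equiv.Perm (Fin R.card) ≃ ({x // x ∈ S} ≃ {x // x ∈ R}) :=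
  Equiv.equivCongr (S.orderIsoOfFin h.symm).toEquiv (R.orderIsoOfFin rfl).toEquiv

theorem colDet_eq_sum (R S : Finset (Fin n)) (h : R.card = S.card) :
    colDet R S = ∑ F : {x // x ∈ S} ≃ {x // x ∈ R},
      Equiv.Perm.sign ((permEquivBij R S h).symm F) • ∏ d ∈ S.attach, Ygen n (F d) d := by
  rw [colDet, dif_pos h, Matrix.det_apply]
  refine Fintype.sum_equiv (permEquivBij R S h) _ _ fun σ => ?_
  rw [Equiv.symm_apply_apply, ← Finset.univ_eq_attach,
    ← Equiv.prod_comp (S.orderIsoOfFin h.symm).toEquiv]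
  simp [permEquivBij]

open Classical in
theorem prod_prod_Ygen_eq_ite (F : ∀ j, {x // x ∈ D j} ≃ {x // x ∈ C j}) :
    ∏ j, ∏ d ∈ (D j).attach, Ygen n (F j d) d = if FlaggedD F then ymon F else 0 := by
  split_ifs with hF
  · exact Finset.prod_congr rfl fun j _ => Finset.prod_congr rfl fun d _ => if_pos (hF j d)
  · obtain ⟨j, d, hd⟩ : ∃ j, ∃ d : {x // x ∈ D j}, (d : Fin n) < F j d := by
      simpa [FlaggedD] using hF
    exact Finset.prod_eq_zero (Finset.mem_univ j) <|
      Finset.prod_eq_zero (Finset.mem_attach _ d) (if_neg hd.not_ge)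

noncomputable def fillingSign (hcard : ∀ j, (C j).card = (D j).card)
    (F : ∀ j, {x // x ∈ D j} ≃ {x // x ∈ C j}) : ℤˣ :=
  ∏ j, Equiv.Perm.sign ((permEquivBij (C j) (D j) (hcard j)).symm (F j))

open Classical in
theorem diagDet_eq_sum (hcard : ∀ j, (C j).card = (D j).card) :
    diagDet C D = ∑ F : ∀ j, {x // x ∈ D j} ≃ {x // x ∈ C j},
      fillingSign hcard F • if FlaggedD F then ymon F else 0 := by
  rw [diagDet, Finset.prod_congr rfl fun j _ => colDet_eq_sum (C j) (D j) (hcard j),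
    Fintype.prod_sum]
  refine Finset.sum_congr rfl fun F _ => ?_
  rw [Finset.prod_smul, prod_prod_Ygen_eq_ite, fillingSign]

theorem coeff_diagDet_of_unique (hcard : ∀ j, (C j).card = (D j).card)
    {F₀ : ∀ j, {x // x ∈ D j} ≃ {x // x ∈ C j}} (hF₀ : FlaggedD F₀)
    (huniq : ∀ F : ∀ j, {x // x ∈ D j} ≃ {x // x ∈ C j},
      FlaggedD F → ymon F = ymon F₀ → F = F₀) :
    coeff (ymonExp F₀) (diagDet C D) = ((fillingSign hcard F₀ : ℤ) : ℂ) := by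
  classical
  rw [diagDet_eq_sum hcard, coeff_sum, Finset.sum_eq_single F₀]
  · rw [if_pos hF₀, coeff_smul, ymon_eq_monomial, coeff_monomial, if_pos rfl, Units.smul_def,
      zsmul_one]
  · intro F _ hne
    split_ifs with hF
    · rw [coeff_smul, ymon_eq_monomial, coeff_monomial, if_neg, smul_zero]
      exact fun h => hne (huniq F hF (by rw [ymon_eq_monomial, ymon_eq_monomial, h]))
    · rw [smul_zero, coeff_zero]
  · exact fun h => absurd (Finset.mem_univ F₀) h

end Fillings

theorem max_monomial_appears_general {n : ℕ} (C D : Fin n → Finset (Fin n))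
    (Fmax : ∀ j, {x // x ∈ D j} ≃ {x // x ∈ C j})
    (hflag : FlaggedD Fmax)
    (hmax : ∀ F : ∀ j, {x // x ∈ D j} ≃ {x // x ∈ C j},
      FlaggedD F → F ≠ Fmax → LexGT (wt Fmax) (wt F)) :
    (∀ F : ∀ j, {x // x ∈ D j} ≃ {x // x ∈ C j},
        FlaggedD F → ymon F = ymon Fmax → F = Fmax) ∧
    ∃ e : (Fin n × Fin n) →₀ ℕ,
      ymon Fmax = MvPolynomial.monomial e (1 : ℂ) ∧
      (MvPolynomial.coeff e (diagDet C D) = 1 ∨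
        MvPolynomial.coeff e (diagDet C D) = -1) := by
  have huniq : ∀ F : ∀ j, {x // x ∈ D j} ≃ {x // x ∈ C j},
      FlaggedD F → ymon F = ymon Fmax → F = Fmax :=
    fun _ hF => eq_of_ymon_eq_of_lexGT hmax hF
  have hcard : ∀ j, (C j).card = (D j).card := fun j => (Finset.card_eq_of_equiv (Fmax j)).symm
  refine ⟨huniq, ymonExp Fmax, ymon_eq_monomial Fmax, ?_⟩
  rw [coeff_diagDet_of_unique hcard hflag huniq]
  rcases Int.units_eq_one_or (fillingSign hcard Fmax) with h | h <;> simp [h]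

/-- the monomial of the maximal-weight flagged filling `Fmax` appears in
`det(Y^C_D) = ∏_j det(Y^{C_j}_{D_j})` with coefficient `±1`; indeed `Fmax` is the unique
flagged filling with monomial `y^{Fmax}`. -/
theorem max_monomial_appears {n : ℕ} (C D : Fin n → Finset (Fin n))
    (hG : ∀ j, Gale (C j) (D j))
    (Fmax : ∀ j, {x // x ∈ D j} ≃ {x // x ∈ C j})
    (hflag : FlaggedD Fmax)
    (hmax : ∀ F : ∀ j, {x // x ∈ D j} ≃ {x // x ∈ C j},
      FlaggedD F → F ≠ Fmax → LexGT (wt Fmax) (wt F)) :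
    (∀ F : ∀ j, {x // x ∈ D j} ≃ {x // x ∈ C j},
        FlaggedD F → ymon F = ymon Fmax → F = Fmax) ∧
    ∃ e : (Fin n × Fin n) →₀ ℕ,
      ymon Fmax = MvPolynomial.monomial e (1 : ℂ) ∧
      (MvPolynomial.coeff e (diagDet C D) = 1 ∨
        MvPolynomial.coeff e (diagDet C D) = -1) :=
  max_monomial_appears_general C D Fmax hflag hmax
end

section
/- Let D = (D_1,...,D_n) be a diagram in the n×n grid that avoids the configuration of Figure 1: there do not exist rows i_1 < i_2 and columns j_1 < j_2 with i_1 ∉ D_{j_1}, i_1 ∉ D_{j_2}, i_2 ∈ D_{j_1}, i_2 ∈ D_{j_2}. Suppose C and C' are two diagrams with C ≤ D and C' ≤ D, and F_max, F'_max are the lexicographically-maximal-weight flagged fillings of D with contents C and C' respectively. If the monomials y^{F_max} and y^{F'_max} are equal, then C = C'. -/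
open Finset

/-- `D` avoids the forbidden configuration: there are no rows `i₁ < i₂` and columns
`j₁ < j₂` with `(i₁,j₁), (i₁,j₂) ∉ D` and `(i₂,j₁), (i₂,j₂) ∈ D`. -/
def Avoids {n : ℕ} (D : Fin n → Finset (Fin n)) : Prop :=
  ¬ ∃ i₁ i₂ j₁ j₂ : Fin n, i₁ < i₂ ∧ j₁ < j₂ ∧
      i₁ ∉ D j₁ ∧ i₁ ∉ D j₂ ∧ i₂ ∈ D j₁ ∧ i₂ ∈ D j₂

section Aux

variable {n : ℕ}

/-- Product of variables is a monomial. -/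
lemma prod_X_eq_monomial {α : Type*} (s : Finset α) (f : α → (Fin n × Fin n)) :
    ∏ x ∈ s, (MvPolynomial.X (f x) : MvPolynomial (Fin n × Fin n) ℂ) =
      MvPolynomial.monomial (∑ x ∈ s, Finsupp.single (f x) 1) 1 := by
  induction s using Finset.cons_induction with
  | empty => simp
  | cons a s ha ih =>
      rw [Finset.prod_cons, Finset.sum_cons, ih, MvPolynomial.X,
        MvPolynomial.monomial_mul, one_mul]

/-- Product of monomials with coefficient one. -/
lemma prod_monomial_one {α : Type*} (s : Finset α) (g : α → ((Fin n × Fin n) →₀ ℕ)) :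
    ∏ x ∈ s, (MvPolynomial.monomial (g x) (1 : ℂ)) =
      MvPolynomial.monomial (∑ x ∈ s, g x) 1 := by
  induction s using Finset.cons_induction with
  | empty => simp
  | cons a s ha ih =>
      rw [Finset.prod_cons, Finset.sum_cons, ih, MvPolynomial.monomial_mul, one_mul]

lemma ymon_eq_monomial_s11 {D C : Fin n → Finset (Fin n)}
    (F : ∀ j, {x // x ∈ D j} ≃ {x // x ∈ C j}) :
    ymon F = MvPolynomial.monomial
      (∑ j : Fin n, ∑ d ∈ (D j).attach,
        Finsupp.single (((F j) d : Fin n), (d : Fin n)) 1) 1 := by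
  unfold ymon
  rw [← prod_monomial_one]
  exact Finset.prod_congr rfl fun j _ => prod_X_eq_monomial _ _

/-- The key exchange fact: in a lexicographically maximal flagged filling, a box whose
entry is strictly smaller than its row index must have that entry's row missing from
the column. -/
lemma key_notin {D C : Fin n → Finset (Fin n)}
    (F : ∀ j, {x // x ∈ D j} ≃ {x // x ∈ C j}) (hflag : FlaggedD F)
    (hmax : ∀ G : ∀ j, {x // x ∈ D j} ≃ {x // x ∈ C j},
      FlaggedD G → G ≠ F → LexGT (wt F) (wt G))
    (j : Fin n) (b : {x // x ∈ D j}) (hlt : ((F j b : Fin n)) < (b : Fin n)) :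
    ((F j b : Fin n)) ∉ D j := by
  intro hyD
  set y : Fin n := (F j b : Fin n) with hy
  set a : {x // x ∈ D j} := ⟨y, hyD⟩ with ha
  have hab : a ≠ b := by
    intro h
    have : y = (b : Fin n) := congrArg Subtype.val h
    exact absurd (this ▸ hlt) (lt_irrefl _)
  set w : Fin n := (F j a : Fin n) with hw
  have hwy : w ≤ y := hflag j a
  have hwne : w ≠ y := by
    intro h
    have h2 : F j a = F j b := Subtype.ext h
    exact hab ((F j).injective h2)
  have hwlt : w < y := lt_of_le_of_ne hwy hwne
  set G : ∀ j', {x // x ∈ D j'} ≃ {x // x ∈ C j'} :=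
    Function.update F j ((Equiv.swap a b).trans (F j)) with hG
  have hGj : G j = (Equiv.swap a b).trans (F j) := Function.update_self _ _ _
  have hGj' : ∀ j', j' ≠ j → G j' = F j' := fun j' h => Function.update_of_ne h _ _
  have hGflag : FlaggedD G := by
    intro j' d'
    by_cases hj : j = j'
    · subst hj
      rw [hGj]
      simp only [Equiv.trans_apply]
      rcases eq_or_ne d' a with rfl | hda
      · rw [Equiv.swap_apply_left]
      · rcases eq_or_ne d' b with rfl | hdb
        · rw [Equiv.swap_apply_right]
          exact le_of_lt (lt_trans hwlt hlt)
        · rw [Equiv.swap_apply_of_ne_of_ne hda hdb]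
          exact hflag j d'
    · rw [hGj' j' (Ne.symm hj)]
      exact hflag j' d'
  have hGa : G j a = F j b := by rw [hGj]; simp [Equiv.swap_apply_left]
  have hGne : G ≠ F := by
    intro h
    have h1 : ((G j a : Fin n)) = ((F j a : Fin n)) := by rw [h]
    rw [hGa] at h1
    exact hwne (h1.symm)
  have hwt_eq : ∀ t : Fin n, t ≠ y → t ≠ (b : Fin n) → wt G t = wt F t := by
    intro t ht1 ht2
    unfold wt
    refine Finset.sum_congr rfl fun j' _ => ?_
    by_cases hj : j = j'
    · subst hj
      by_cases h : t ∈ D j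
      · rw [dif_pos h, dif_pos h]
        have hna : (⟨t, h⟩ : {x // x ∈ D j}) ≠ a := fun hc =>
          ht1 (congrArg Subtype.val hc)
        have hnb : (⟨t, h⟩ : {x // x ∈ D j}) ≠ b := fun hc =>
          ht2 (congrArg Subtype.val hc)
        rw [hGj]
        simp only [Equiv.trans_apply, Equiv.swap_apply_of_ne_of_ne hna hnb]
      · rw [dif_neg h, dif_neg h]
    · rw [hGj' j' (Ne.symm hj)]
  have hwt_lt : wt F y < wt G y := by
    unfold wt
    refine Finset.sum_lt_sum (fun j' _ => ?_) ⟨j, Finset.mem_univ j, ?_⟩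
    · by_cases hj : j = j'
      · subst hj
        rw [dif_pos hyD, dif_pos hyD]
        have h1 : (⟨y, hyD⟩ : {x // x ∈ D j}) = a := rfl
        rw [h1, hGa]
        have : ((F j a : Fin n) : ℕ) ≤ ((F j b : Fin n) : ℕ) := hwlt.le
        omega
      · rw [hGj' j' (Ne.symm hj)]
    · rw [dif_pos hyD, dif_pos hyD]
      have h1 : (⟨y, hyD⟩ : {x // x ∈ D j}) = a := rfl
      rw [h1, hGa]
      have : ((F j a : Fin n) : ℕ) < ((F j b : Fin n) : ℕ) := hwlt
      omega
  obtain ⟨i₀, hlt₀, heq₀⟩ := hmax G hGflag hGne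
  rcases lt_trichotomy i₀ y with h | h | h
  · have he : wt G i₀ = wt F i₀ :=
      hwt_eq i₀ (ne_of_lt h) (ne_of_lt (lt_trans h hlt))
    omega
  · subst h
    omega
  · have he : wt F y = wt G y := heq₀ y h
    omega

/-- One-sided step: if `F` places a value strictly below the row index, the other
filling places the same value in the same box. -/
lemma step_aux {D C C' : Fin n → Finset (Fin n)} (hav : Avoids D)
    (F : ∀ j, {x // x ∈ D j} ≃ {x // x ∈ C j})
    (F' : ∀ j, {x // x ∈ D j} ≃ {x // x ∈ C' j})
    (key : ∀ (j : Fin n) (b : {x // x ∈ D j}),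
      ((F j b : Fin n)) < (b : Fin n) → ((F j b : Fin n)) ∉ D j)
    (key' : ∀ (j : Fin n) (b : {x // x ∈ D j}),
      ((F' j b : Fin n)) < (b : Fin n) → ((F' j b : Fin n)) ∉ D j)
    (hcount : ∀ p : Fin n × Fin n,
      (∑ j : Fin n, ∑ d ∈ (D j).attach,
        (if (((F j) d : Fin n), (d : Fin n)) = p then 1 else 0)) =
      (∑ j : Fin n, ∑ d ∈ (D j).attach,
        (if (((F' j) d : Fin n), (d : Fin n)) = p then 1 else 0)))
    (j : Fin n) (d : {x // x ∈ D j}) (hlt : ((F j d : Fin n)) < (d : Fin n)) :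
    ((F' j d : Fin n)) = ((F j d : Fin n)) := by
  set v : Fin n := (F j d : Fin n) with hv
  have hpos : (0 : ℕ) < ∑ j' : Fin n, ∑ d' ∈ (D j').attach,
      (if (((F j') d' : Fin n), (d' : Fin n)) = (v, (d : Fin n)) then 1 else 0) := by
    refine Finset.sum_pos' (fun _ _ => Finset.sum_nonneg fun _ _ => by positivity)
      ⟨j, Finset.mem_univ j, ?_⟩
    refine Finset.sum_pos' (fun _ _ => by positivity)
      ⟨d, Finset.mem_attach _ d, ?_⟩
    simp [hv]
  rw [hcount] at hpos
  have hne : (∑ j' : Fin n, ∑ d' ∈ (D j').attach,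
      (if (((F' j') d' : Fin n), (d' : Fin n)) = (v, (d : Fin n)) then 1 else 0)) ≠ 0 :=
    Nat.pos_iff_ne_zero.mp hpos
  obtain ⟨k, -, hk⟩ := Finset.exists_ne_zero_of_sum_ne_zero hne
  obtain ⟨e, -, he⟩ := Finset.exists_ne_zero_of_sum_ne_zero hk
  have hpe : (((F' k) e : Fin n), (e : Fin n)) = (v, (d : Fin n)) := by
    by_contra hc
    rw [if_neg hc] at he
    exact he rfl
  have hval : ((F' k) e : Fin n) = v := (Prod.mk.injEq _ _ _ _ ▸ hpe).1
  have hrow : (e : Fin n) = (d : Fin n) := (Prod.mk.injEq _ _ _ _ ▸ hpe).2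
  have hlt' : ((F' k) e : Fin n) < (e : Fin n) := by rw [hval, hrow]; exact hlt
  have hnotj : v ∉ D j := key j d hlt
  have hnotk : v ∉ D k := hval ▸ key' k e hlt'
  have hjk : k = j := by
    by_contra hne'
    apply hav
    refine ⟨v, (d : Fin n), min j k, max j k, hlt, ?_, ?_, ?_, ?_, ?_⟩
    · exact min_lt_max.mpr (Ne.symm hne')
    · rcases min_choice j k with h | h <;> rw [h] <;> assumption
    · rcases max_choice j k with h | h <;> rw [h] <;> assumption
    · rcases min_choice j k with h | h <;> rw [h]
      · exact d.2
      · exact hrow ▸ e.2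
    · rcases max_choice j k with h | h <;> rw [h]
      · exact d.2
      · exact hrow ▸ e.2
  subst hjk
  have : e = d := Subtype.ext hrow
  subst this
  exact hval

end Aux

/-- if `D` avoids the forbidden configuration and `C, C' ≤ D`, then the
maximal-weight flagged fillings of `D` with contents `C` and `C'` having equal
monomials forces `C = C'`. -/
theorem content_determined_by_max_monomial {n : ℕ}
    (D C C' : Fin n → Finset (Fin n)) (hav : Avoids D)
    (hG : ∀ j, Gale (C j) (D j)) (hG' : ∀ j, Gale (C' j) (D j))
    (Fmax : ∀ j, {x // x ∈ D j} ≃ {x // x ∈ C j})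
    (F'max : ∀ j, {x // x ∈ D j} ≃ {x // x ∈ C' j})
    (hflag : FlaggedD Fmax) (hflag' : FlaggedD F'max)
    (hmax : ∀ F : ∀ j, {x // x ∈ D j} ≃ {x // x ∈ C j},
      FlaggedD F → F ≠ Fmax → LexGT (wt Fmax) (wt F))
    (hmax' : ∀ F : ∀ j, {x // x ∈ D j} ≃ {x // x ∈ C' j},
      FlaggedD F → F ≠ F'max → LexGT (wt F'max) (wt F))
    (hmon : ymon Fmax = ymon F'max) :
    C = C' := by
  -- Equality of the exponent vectors
  have hS : (∑ j : Fin n, ∑ d ∈ (D j).attach,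
        Finsupp.single (((Fmax j) d : Fin n), (d : Fin n)) 1) =
      (∑ j : Fin n, ∑ d ∈ (D j).attach,
        Finsupp.single (((F'max j) d : Fin n), (d : Fin n)) 1) := by
    have h1 := ymon_eq_monomial_s11 Fmax
    have h2 := ymon_eq_monomial_s11 F'max
    rw [h1, h2] at hmon
    exact MvPolynomial.monomial_left_injective (one_ne_zero) hmon
  have hcount : ∀ p : Fin n × Fin n,
      (∑ j : Fin n, ∑ d ∈ (D j).attach,
        (if (((Fmax j) d : Fin n), (d : Fin n)) = p then 1 else 0)) =
      (∑ j : Fin n, ∑ d ∈ (D j).attach,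
        (if (((F'max j) d : Fin n), (d : Fin n)) = p then 1 else 0)) := by
    intro p
    have := congrArg (fun s : (Fin n × Fin n) →₀ ℕ => s p) hS
    simpa only [Finset.sum_apply', Finsupp.single_apply] using this
  have hcount' : ∀ p : Fin n × Fin n,
      (∑ j : Fin n, ∑ d ∈ (D j).attach,
        (if (((F'max j) d : Fin n), (d : Fin n)) = p then 1 else 0)) =
      (∑ j : Fin n, ∑ d ∈ (D j).attach,
        (if (((Fmax j) d : Fin n), (d : Fin n)) = p then 1 else 0)) :=
    fun p => (hcount p).symm
  have key := key_notin Fmax hflag hmax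
  have key' := key_notin F'max hflag' hmax'
  -- Pointwise equality of the two fillings
  have main : ∀ (j : Fin n) (d : {x // x ∈ D j}),
      ((Fmax j) d : Fin n) = ((F'max j) d : Fin n) := by
    intro j d
    rcases lt_or_eq_of_le (hflag j d) with h | h
    · exact (step_aux hav Fmax F'max key key' hcount j d h).symm
    · rcases lt_or_eq_of_le (hflag' j d) with h' | h'
      · exact step_aux hav F'max Fmax key' key hcount' j d h'
      · rw [h, h']
  -- Conclude `C = C'`
  funext j
  ext i
  constructor
  · intro hi
    obtain ⟨d, hd⟩ := (Fmax j).surjective ⟨i, hi⟩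
    have h1 : ((Fmax j) d : Fin n) = i := congrArg Subtype.val hd
    have h2 : ((F'max j) d : Fin n) = i := (main j d) ▸ h1
    exact h2 ▸ ((F'max j) d).2
  · intro hi
    obtain ⟨d, hd⟩ := (F'max j).surjective ⟨i, hi⟩
    have h1 : ((F'max j) d : Fin n) = i := congrArg Subtype.val hd
    have h2 : ((Fmax j) d : Fin n) = i := (main j d).symm ▸ h1
    exact h2 ▸ ((Fmax j) d).2
end

section
/- Let D be a diagram in the n×n grid avoiding the configuration: no i_1 < i_2 and j_1 < j_2 with (i_1,j_1) ∉ D, (i_1,j_2) ∉ D, (i_2,j_1) ∈ D, (i_2,j_2) ∈ D. Then for every monomial x^a, the polynomials {det(Y^C_D) : C ≤ D, x^C = x^a} are linearly independent over ℂ, where x^C = Π_{j=1}^n Π_{i ∈ C_j} x_i. -/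
open Finset

/-- The monomial `x^C = ∏_j ∏_{i ∈ C_j} x_i` of a diagram `C`. -/
noncomputable def xmon {n : ℕ} (C : Fin n → Finset (Fin n)) : MvPolynomial (Fin n) ℂ :=
  ∏ j : Fin n, ∏ i ∈ C j, MvPolynomial.X i

section Core
variable {n k : ℕ} (r s : Fin k → Fin n)

/-- feasibility of an assignment: slot `i` gets row `r (σ i)`, need row ≤ slot. -/
def Feas (σ : Equiv.Perm (Fin k)) : Prop := ∀ i, r (σ i) ≤ s i

/-- weight of an assignment. -/
def wtp (σ : Equiv.Perm (Fin k)) : ℕ := ∑ i, ((r (σ i) : ℕ) + 1) * ((s i : ℕ) + 1)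

variable {r s}

lemma swap_feas_lt (hr : StrictMono r) (hs : StrictMono s) {σ : Equiv.Perm (Fin k)}
    (hσ : Feas r s σ) {a b : Fin k} (hab : a < b) (h1 : r (σ a) < r (σ b))
    (h2 : r (σ b) ≤ s a) :
    Feas r s (σ * Equiv.swap a b) ∧ wtp r s (σ * Equiv.swap a b) < wtp r s σ := by
  have hne : a ≠ b := ne_of_lt hab
  have hswa : (σ * Equiv.swap a b) a = σ b := by simp [Equiv.swap_apply_left]
  have hswb : (σ * Equiv.swap a b) b = σ a := by simp [Equiv.swap_apply_right]
  have hswo : ∀ i, i ≠ a → i ≠ b → (σ * Equiv.swap a b) i = σ i := by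
    intro i hia hib; simp [Equiv.swap_apply_of_ne_of_ne hia hib]
  constructor
  · intro i
    rcases eq_or_ne i a with rfl | hia
    · rw [hswa]; exact h2
    rcases eq_or_ne i b with rfl | hib
    · rw [hswb]; exact le_trans (le_of_lt h1) (hσ _)
    · rw [hswo i hia hib]; exact hσ i
  · -- weight strictly decreases
    classical
    have key : ∀ τ : Equiv.Perm (Fin k), wtp r s τ =
        (∑ i ∈ ({a, b} : Finset (Fin k))ᶜ, ((r (τ i) : ℕ) + 1) * ((s i : ℕ) + 1)) +
        (((r (τ a) : ℕ) + 1) * ((s a : ℕ) + 1) + ((r (τ b) : ℕ) + 1) * ((s b : ℕ) + 1)) := by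
      intro τ
      rw [wtp, ← Finset.sum_compl_add_sum ({a, b} : Finset (Fin k))]
      congr 1
      rw [Finset.sum_pair hne]
    rw [key (σ * Equiv.swap a b), key σ]
    have hcongr : ∑ i ∈ ({a, b} : Finset (Fin k))ᶜ,
        ((r ((σ * Equiv.swap a b) i) : ℕ) + 1) * ((s i : ℕ) + 1) =
        ∑ i ∈ ({a, b} : Finset (Fin k))ᶜ, ((r (σ i) : ℕ) + 1) * ((s i : ℕ) + 1) := by
      apply Finset.sum_congr rfl
      intro i hi
      simp only [Finset.mem_compl, Finset.mem_insert, Finset.mem_singleton, not_or] at hi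
      rw [hswo i hi.1 hi.2]
    rw [hcongr]
    apply Nat.add_lt_add_left
    rw [hswa, hswb]
    -- (x_b+1)(s_a+1) + (x_a+1)(s_b+1) < (x_a+1)(s_a+1)+(x_b+1)(s_b+1)
    have hx : (r (σ a) : ℕ) < (r (σ b) : ℕ) := h1
    have hy : (s a : ℕ) < (s b : ℕ) := hs hab
    nlinarith
end Core

section Core2
variable {n k : ℕ} {r s : Fin k → Fin n}

/-- reverse strong induction on `Fin k`. -/
lemma fin_rev_strong_induction {k : ℕ} (P : Fin k → Prop)
    (step : ∀ t, (∀ u, t < u → P u) → P t) : ∀ t, P t := by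
  have H : ∀ d : ℕ, ∀ t : Fin k, k ≤ t.val + d + 1 → P t := by
    intro d
    induction d with
    | zero =>
      intro t ht
      refine step t (fun u hu => absurd u.isLt ?_)
      have : t.val < u.val := hu
      omega
    | succ d ih =>
      intro t ht
      refine step t (fun u hu => ih u ?_)
      have : t.val < u.val := hu
      omega
  exact fun t => H k t (by omega)

/-- the local optimality condition characterizing the minimum matching. -/
def LCond (r s : Fin k → Fin n) (σ : Equiv.Perm (Fin k)) : Prop :=
  ∀ a b : Fin k, a < b → r (σ a) < r (σ b) → ¬ (r (σ b) ≤ s a)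

/-- any two feasible assignments satisfying the local condition agree. -/
lemma LCond_unique (hr : StrictMono r) (hs : StrictMono s)
    {σ τ : Equiv.Perm (Fin k)} (hσf : Feas r s σ) (hσL : LCond r s σ)
    (hτf : Feas r s τ) (hτL : LCond r s τ) : σ = τ := by
  have key : ∀ t : Fin k, σ.symm t = τ.symm t := by
    apply fin_rev_strong_induction (fun t => σ.symm t = τ.symm t)
    intro t IH
    -- general claim: not (τ.symm t < σ.symm t), by symmetry
    have main : ∀ σ' τ' : Equiv.Perm (Fin k), Feas r s σ' → LCond r s σ' → Feas r s τ' →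
        (∀ u, t < u → σ'.symm u = τ'.symm u) → ¬ (τ'.symm t < σ'.symm t) := by
      intro σ' τ' hσ'f hσ'L hτ'f hIH hlt
      set a := τ'.symm t with ha
      set b := σ'.symm t with hb
      have hσ'b : σ' b = t := Equiv.apply_symm_apply _ _
      have hτ'a : τ' a = t := Equiv.apply_symm_apply _ _
      -- consider t' = σ' a
      set t' := σ' a with ht'
      have htne : t' ≠ t := by
        intro h
        have : a = b := by
          have := congrArg σ'.symm h
          simpa [ht', hσ'b.symm, Equiv.symm_apply_apply] using this
        exact absurd (this ▸ hlt) (lt_irrefl _)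
      have htlt : t' < t := by
        rcases lt_or_gt_of_ne htne with h | h
        · exact h
        · exfalso
          have h1 : σ'.symm t' = τ'.symm t' := hIH t' h
          have : σ'.symm t' = a := by rw [ht', Equiv.symm_apply_apply]
          rw [this] at h1
          have : τ' a = t' := by rw [h1]; exact Equiv.apply_symm_apply _ _
          rw [hτ'a] at this
          exact htne this.symm
      -- now a < b, r (σ' a) < r (σ' b), r (σ' b) ≤ s a : contradiction with LCond
      have hrlt : r (σ' a) < r (σ' b) := by
        rw [hσ'b, ← ht']; exact hr htlt
      have hfeas : r (σ' b) ≤ s a := by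
        rw [hσ'b, ← hτ'a]; exact hτ'f a
      exact hσ'L a b hlt hrlt hfeas
    have h1 := main σ τ hσf hσL hτf (fun u hu => IH u hu)
    have h2 := main τ σ hτf hτL hσf (fun u hu => (IH u hu).symm)
    have := le_antisymm (not_lt.mp h1) (not_lt.mp h2)
    exact this.symm ▸ rfl
  have hsymm : σ.symm = τ.symm := Equiv.ext key
  have h2 : σ.symm.symm = τ.symm.symm := by rw [hsymm]
  simpa using h2
end Core2

section Core3
variable {n k : ℕ} {r s : Fin k → Fin n}

/-- existence of a feasible minimizer. -/
lemma exists_min_feas (hId : Feas r s 1) :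
    ∃ σ, Feas r s σ ∧ ∀ τ, Feas r s τ → wtp r s σ ≤ wtp r s τ := by
  classical
  obtain ⟨σ, hσ, hmin⟩ := Finset.exists_min_image
    (Finset.univ.filter (fun σ => Feas r s σ)) (wtp r s)
    ⟨1, by simpa using hId⟩
  rw [Finset.mem_filter] at hσ
  exact ⟨σ, hσ.2, fun τ hτ => hmin τ (Finset.mem_filter.mpr ⟨Finset.mem_univ _, hτ⟩)⟩

variable (hr : StrictMono r) (hs : StrictMono s) (hId : Feas r s 1)

/-- the minimal feasible assignment. -/
noncomputable def minSig (hId : Feas r s 1) : Equiv.Perm (Fin k) :=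
  (exists_min_feas hId).choose

lemma minSig_feas : Feas r s (minSig hId) := (exists_min_feas hId).choose_spec.1

lemma minSig_min : ∀ τ, Feas r s τ → wtp r s (minSig hId) ≤ wtp r s τ :=
  (exists_min_feas hId).choose_spec.2

include hr hs in
lemma minimizer_LCond {σ : Equiv.Perm (Fin k)} (hσf : Feas r s σ)
    (hσm : ∀ τ, Feas r s τ → wtp r s σ ≤ wtp r s τ) : LCond r s σ := by
  intro a b hab h1 h2
  obtain ⟨hf, hlt⟩ := swap_feas_lt hr hs hσf hab h1 h2
  exact absurd (hσm _ hf) (not_le.mpr hlt)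

include hr hs in
lemma minSig_LCond : LCond r s (minSig hId) :=
  minimizer_LCond hr hs (minSig_feas hId) (minSig_min hId)

include hr hs in
/-- strictness: any feasible σ other than minSig has strictly bigger weight. -/
lemma minSig_strict {σ : Equiv.Perm (Fin k)} (hσf : Feas r s σ)
    (hne : σ ≠ minSig hId) : wtp r s (minSig hId) < wtp r s σ := by
  rcases lt_or_eq_of_le (minSig_min hId σ hσf) with h | h
  · exact h
  · exfalso
    apply hne
    have hσm : ∀ τ, Feas r s τ → wtp r s σ ≤ wtp r s τ := by
      intro τ hτ; rw [← h]; exact minSig_min hId τ hτ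
    exact LCond_unique hr hs hσf (minimizer_LCond hr hs hσf hσm)
      (minSig_feas hId) (minSig_LCond hr hs hId)

include hr hs in
/-- self-matching: if the value `s u` is a row value, then slot `u` is matched to it. -/
lemma minSig_self_match {u : Fin k} {t : Fin k} (ht : r t = s u) :
    r (minSig hId (u : Fin k)) = s u := by
  set σ := minSig hId with hσdef
  set b := σ.symm t with hb
  have hσb : σ b = t := Equiv.apply_symm_apply _ _
  have hfb' : r t ≤ s b := by rw [← hσb]; exact minSig_feas hId b
  have hub : u ≤ b := by
    by_contra hlt
    push_neg at hlt
    exact absurd (lt_of_le_of_lt (ht ▸ hfb') (by exact hs hlt)) (lt_irrefl _)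
  rcases eq_or_lt_of_le hub with rfl | hub
  · rw [hσb, ht]
  · -- u < b; let x = r (σ u) ≤ s u; if x < s u, LCond violated
    have hfu : r (σ u) ≤ s u := minSig_feas hId u
    rcases eq_or_lt_of_le hfu with h | h
    · exact h
    · exfalso
      have hrlt : r (σ u) < r (σ b) := by rw [hσb, ht]; exact h
      have hle : r (σ b) ≤ s u := by rw [hσb, ht]
      exact minSig_LCond hr hs hId u b hub hrlt hle
end Core3

section Wt
variable {n : ℕ}

/-- weight of a single variable. -/
def cwt (p : Fin n × Fin n) : ℕ := ((p.1 : ℕ) + 1) * ((p.2 : ℕ) + 1)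

/-- weight of an exponent vector. -/
def Wt (e : (Fin n × Fin n) →₀ ℕ) : ℕ := e.sum fun p m => m * cwt p

@[simp] lemma Wt_zero : Wt (0 : (Fin n × Fin n) →₀ ℕ) = 0 := Finsupp.sum_zero_index

lemma Wt_add (a b : (Fin n × Fin n) →₀ ℕ) : Wt (a + b) = Wt a + Wt b :=
  Finsupp.sum_add_index' (fun p => zero_mul _) (fun p m₁ m₂ => add_mul m₁ m₂ _)

@[simp] lemma Wt_single (p : Fin n × Fin n) (m : ℕ) : Wt (Finsupp.single p m) = m * cwt p :=
  Finsupp.sum_single_index (zero_mul _)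

lemma Wt_sum {ι : Type*} (t : Finset ι) (f : ι → (Fin n × Fin n) →₀ ℕ) :
    Wt (∑ i ∈ t, f i) = ∑ i ∈ t, Wt (f i) := by
  classical
  induction t using Finset.cons_induction with
  | empty => simp
  | cons a t ha ih => rw [Finset.sum_cons, Finset.sum_cons, Wt_add, ih]
end Wt

section Expp
variable {n k : ℕ} (r s : Fin k → Fin n)

/-- exponent vector of the monomial attached to an assignment. -/
noncomputable def expp (σ : Equiv.Perm (Fin k)) : (Fin n × Fin n) →₀ ℕ :=
  ∑ i, Finsupp.single (r (σ i), s i) 1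

lemma Wt_expp (σ : Equiv.Perm (Fin k)) : Wt (expp r s σ) = wtp r s σ := by
  rw [expp, Wt_sum, wtp]
  exact Finset.sum_congr rfl fun i _ => by rw [Wt_single, one_mul]; rfl

variable {r s}

lemma expp_apply_pos (σ : Equiv.Perm (Fin k)) (i : Fin k) :
    1 ≤ expp r s σ (r (σ i), s i) := by
  classical
  rw [expp, Finsupp.finset_sum_apply]
  calc (1 : ℕ) = Finsupp.single (r (σ i), s i) 1 (r (σ i), s i) := by simp
  _ ≤ _ := Finset.single_le_sum (f := fun j => Finsupp.single (r (σ j), s j) 1 (r (σ i), s i))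
      (fun j _ => Nat.zero_le _) (Finset.mem_univ i)

lemma expp_apply_ne (σ : Equiv.Perm (Fin k)) (p : Fin n × Fin n)
    (hp : ∀ i, (r (σ i), s i) ≠ p) : expp r s σ p = 0 := by
  classical
  rw [expp, Finsupp.finset_sum_apply]
  exact Finset.sum_eq_zero fun i _ => Finsupp.single_eq_of_ne' (hp i)

/-- a point is in the support of `expp` iff it is one of the matched pairs. -/
lemma expp_mem_iff (σ : Equiv.Perm (Fin k)) (p : Fin n × Fin n) :
    expp r s σ p ≠ 0 ↔ ∃ i, (r (σ i), s i) = p := by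
  constructor
  · intro h
    by_contra hc
    push_neg at hc
    exact h (expp_apply_ne σ p hc)
  · rintro ⟨i, rfl⟩
    have := expp_apply_pos (r := r) (s := s) σ i
    omega

lemma expp_inj (hs : StrictMono s) (hr : Function.Injective r)
    {σ τ : Equiv.Perm (Fin k)} (h : expp r s σ = expp r s τ) : σ = τ := by
  ext i
  have h1 : expp r s τ (r (σ i), s i) ≠ 0 := by
    rw [← h]
    have := expp_apply_pos (r := r) (s := s) σ i
    omega
  obtain ⟨j, hj⟩ := (expp_mem_iff τ _).mp h1
  have hsij : s j = s i := congrArg Prod.snd hj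
  have hji : j = i := hs.injective hsij
  subst hji
  have := hr (congrArg Prod.fst hj)
  exact congrArg Fin.val this.symm

section Poly
open MvPolynomial
open scoped Classical

variable {n k : ℕ}

lemma prod_X_eq_monomial' (f : Fin k → Fin n × Fin n) (t : Finset (Fin k)) :
    (∏ i ∈ t, (X (f i) : MvPolynomial (Fin n × Fin n) ℂ)) =
      monomial (∑ i ∈ t, Finsupp.single (f i) 1) 1 := by
  classical
  induction t using Finset.cons_induction with
  | empty => simp [monomial_zero']
  | cons a t ha ih =>
    rw [Finset.prod_cons, Finset.sum_cons, ih, X, monomial_mul, one_mul]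

variable (r s : Fin k → Fin n)

/-- the generic sub-matrix polynomial expressed through assignments. -/
lemma det_submatrix_eq :
    (Matrix.det (Matrix.of fun a b : Fin k => Ygen n (r a) (s b)) :
        MvPolynomial (Fin n × Fin n) ℂ) =
      ∑ σ : Equiv.Perm (Fin k), (Equiv.Perm.sign σ : ℤ) •
        (if Feas r s σ then (monomial (expp r s σ) 1 : MvPolynomial (Fin n × Fin n) ℂ) else 0) := by
  classical
  rw [Matrix.det_apply]
  apply Finset.sum_congr rfl
  intro σ _
  congr 1
  by_cases hf : Feas r s σ
  · rw [if_pos hf, expp, ← prod_X_eq_monomial' (fun i => (r (σ i), s i)) Finset.univ]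
    apply Finset.prod_congr rfl
    intro i _
    simp only [Matrix.of_apply, Ygen, if_pos (hf i)]
  · rw [if_neg hf]
    rw [Feas, not_forall] at hf
    obtain ⟨i, hi⟩ := hf
    apply Finset.prod_eq_zero (Finset.mem_univ i)
    simp only [Matrix.of_apply, Ygen, if_neg hi]

section ColumnPkg
open MvPolynomial
open scoped Classical

variable {n : ℕ} (R S : Finset (Fin n)) (h : R.card = S.card)

/-- row enumeration. -/
noncomputable def rv : Fin R.card → Fin n := fun i => R.orderEmbOfFin rfl i

/-- slot enumeration. -/
noncomputable def sv : Fin R.card → Fin n := fun i => S.orderEmbOfFin h.symm i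

lemma rv_strictMono : StrictMono (rv R) := (R.orderEmbOfFin rfl).strictMono

lemma sv_strictMono : StrictMono (sv R S h) := (S.orderEmbOfFin h.symm).strictMono

lemma rv_mem (i) : rv R i ∈ R := Finset.orderEmbOfFin_mem R rfl i

lemma sv_mem (i) : sv R S h i ∈ S := Finset.orderEmbOfFin_mem S h.symm i

lemma sv_surj {e : Fin n} (he : e ∈ S) : ∃ u, sv R S h u = e := by
  have : e ∈ Set.range (S.orderEmbOfFin h.symm) := by
    rw [Finset.range_orderEmbOfFin]; exact_mod_cast he
  obtain ⟨u, hu⟩ := this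
  exact ⟨u, hu⟩

lemma rv_surj {x : Fin n} (hx : x ∈ R) : ∃ t, rv R t = x := by
  have : x ∈ Set.range (R.orderEmbOfFin rfl) := by
    rw [Finset.range_orderEmbOfFin]; exact_mod_cast hx
  obtain ⟨t, ht⟩ := this
  exact ⟨t, ht⟩

variable (hId : Feas (rv R) (sv R S h) 1)

/-- the distinguished (minimal) assignment for the column. -/
noncomputable def colMin : Equiv.Perm (Fin R.card) := minSig hId

/-- the distinguished exponent of the column. -/
noncomputable def colExp : (Fin n × Fin n) →₀ ℕ := expp (rv R) (sv R S h) (colMin R S h hId)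

/-- the matched pairs of the column. -/
def ColPair (p : Fin n × Fin n) : Prop :=
  ∃ i, (rv R (colMin R S h hId i), sv R S h i) = p

lemma colExp_ne_iff (p : Fin n × Fin n) :
    colExp R S h hId p ≠ 0 ↔ ColPair R S h hId p := expp_mem_iff _ _

lemma colPair_basic {p : Fin n × Fin n} (hp : ColPair R S h hId p) :
    p.1 ∈ R ∧ p.2 ∈ S ∧ p.1 ≤ p.2 := by
  obtain ⟨i, rfl⟩ := hp
  exact ⟨rv_mem R _, sv_mem R S h i, minSig_feas hId i⟩

lemma colPair_slot_uniq {x x' e : Fin n} (h1 : ColPair R S h hId (x, e))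
    (h2 : ColPair R S h hId (x', e)) : x = x' := by
  obtain ⟨i, hi⟩ := h1
  obtain ⟨j, hj⟩ := h2
  have he : sv R S h i = sv R S h j := by
    rw [show sv R S h i = e from congrArg Prod.snd hi,
      show sv R S h j = e from congrArg Prod.snd hj]
  have : i = j := (sv_strictMono R S h).injective he
  subst this
  have h1 := congrArg Prod.fst hi
  have h2 := congrArg Prod.fst hj
  simp only at h1 h2
  rw [← h1, ← h2]

lemma colPair_slot_exists {e : Fin n} (he : e ∈ S) : ∃ x, ColPair R S h hId (x, e) := by
  obtain ⟨u, rfl⟩ := sv_surj R S h he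
  exact ⟨rv R (colMin R S h hId u), u, rfl⟩

lemma colPair_row_exists {x : Fin n} (hx : x ∈ R) : ∃ e, ColPair R S h hId (x, e) := by
  obtain ⟨t, rfl⟩ := rv_surj R hx
  refine ⟨sv R S h ((colMin R S h hId).symm t), (colMin R S h hId).symm t, ?_⟩
  rw [Equiv.apply_symm_apply]

/-- key: a strictly increasing pair's row is not a slot value. -/
lemma colPair_nontrivial_not_mem {x e : Fin n} (hp : ColPair R S h hId (x, e))
    (hlt : x < e) : x ∉ S := by
  intro hxS
  obtain ⟨u, hu⟩ := sv_surj R S h hxS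
  obtain ⟨i, hi⟩ := hp
  have hx : rv R (colMin R S h hId i) = x := congrArg Prod.fst hi
  have he : sv R S h i = e := congrArg Prod.snd hi
  -- x is a row value equal to slot value sv u, so slot u is self-matched
  have hsm : rv R (colMin R S h hId u) = sv R S h u :=
    minSig_self_match (rv_strictMono R) (sv_strictMono R S h) hId
      (t := colMin R S h hId i) (by rw [hx, hu])
  have : colMin R S h hId u = colMin R S h hId i := by
    apply (rv_strictMono R).injective
    rw [hsm, hu, hx]
  have hui : u = i := (colMin R S h hId).injective this
  subst hui
  rw [hu] at he
  subst he
  exact absurd hlt (lt_irrefl _)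

/-- trivially matched slots are exactly the slots that are also rows. -/
lemma colPair_self_of_mem {e : Fin n} (heS : e ∈ S) (heR : e ∈ R) :
    ColPair R S h hId (e, e) := by
  obtain ⟨u, rfl⟩ := sv_surj R S h heS
  obtain ⟨t, ht⟩ := rv_surj R heR
  have hsm : rv R (colMin R S h hId u) = sv R S h u :=
    minSig_self_match (rv_strictMono R) (sv_strictMono R S h) hId (u := u) (t := t) ht
  exact ⟨u, by rw [hsm]⟩
end ColumnPkg

section DetPkg
open MvPolynomial
open scoped Classical

variable {n : ℕ} (R S : Finset (Fin n)) (h : R.card = S.card)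

lemma colDet_eq_det :
    colDet R S = Matrix.det (Matrix.of fun a b : Fin R.card =>
      Ygen n (R.orderEmbOfFin rfl a) (S.orderEmbOfFin h.symm b)) := dif_pos h

variable (hId : Feas (rv R) (sv R S h) 1)

lemma colDet_expand :
    colDet R S = ∑ σ : Equiv.Perm (Fin R.card), (Equiv.Perm.sign σ : ℤ) •
      (if Feas (rv R) (sv R S h) σ then
        (monomial (expp (rv R) (sv R S h) σ) 1 : MvPolynomial (Fin n × Fin n) ℂ) else 0) := by
  rw [colDet_eq_det R S h]
  exact det_submatrix_eq (rv R) (sv R S h)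

/-- P1: the distinguished coefficient is nonzero. -/
lemma colDet_coeff_ne_zero : coeff (colExp R S h hId) (colDet R S) ≠ 0 := by
  rw [colDet_expand R S h, coeff_sum]
  have hval : ∀ σ : Equiv.Perm (Fin R.card),
      coeff (colExp R S h hId) ((Equiv.Perm.sign σ : ℤ) •
        (if Feas (rv R) (sv R S h) σ then
          (monomial (expp (rv R) (sv R S h) σ) 1 : MvPolynomial (Fin n × Fin n) ℂ) else 0)) =
      if σ = colMin R S h hId then ((Equiv.Perm.sign σ : ℤ) : ℂ) else 0 := by
    intro σ
    rw [coeff_smul]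
    by_cases hf : Feas (rv R) (sv R S h) σ
    · rw [if_pos hf, coeff_monomial]
      by_cases heq : expp (rv R) (sv R S h) σ = colExp R S h hId
      · have hs : σ = colMin R S h hId :=
          expp_inj (sv_strictMono R S h) (rv_strictMono R).injective heq
        rw [if_pos heq, if_pos hs]
        simp
      · have hs : σ ≠ colMin R S h hId := fun hc => heq (by rw [hc]; rfl)
        rw [if_neg heq, if_neg hs]
        simp
    · have hs : σ ≠ colMin R S h hId := fun hc => hf (hc ▸ minSig_feas hId)
      rw [if_neg hf, if_neg hs]
      simp
  rw [Finset.sum_congr rfl (fun σ _ => hval σ), Finset.sum_ite_eq' Finset.univ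
    (colMin R S h hId) (fun σ => ((Equiv.Perm.sign σ : ℤ) : ℂ))]
  rw [if_pos (Finset.mem_univ _)]
  rcases Int.units_eq_one_or (Equiv.Perm.sign (colMin R S h hId)) with hs | hs <;>
    rw [hs] <;> norm_num

/-- P2: every exponent in the support weighs at least the distinguished one,
with equality only for it. -/
lemma colDet_support_wt {e : (Fin n × Fin n) →₀ ℕ} (he : e ∈ (colDet R S).support) :
    Wt (colExp R S h hId) ≤ Wt e ∧ (Wt e = Wt (colExp R S h hId) → e = colExp R S h hId) := by
  rw [colDet_expand R S h] at he
  have := MvPolynomial.support_sum he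
  rw [Finset.mem_biUnion] at this
  obtain ⟨σ, -, hσ⟩ := this
  have hσ' := MvPolynomial.support_smul hσ
  by_cases hf : Feas (rv R) (sv R S h) σ
  · rw [if_pos hf] at hσ'
    have : e ∈ ({expp (rv R) (sv R S h) σ} : Finset _) :=
      Finset.mem_of_subset (MvPolynomial.support_monomial_subset) hσ'
    rw [Finset.mem_singleton] at this
    subst this
    rw [Wt_expp, colExp, Wt_expp]
    constructor
    · exact minSig_min hId σ hf
    · intro hw
      by_contra hne
      have hne' : σ ≠ colMin R S h hId := fun hc => hne (by rw [hc])
      have hstrict := minSig_strict (rv_strictMono R) (sv_strictMono R S h) hId hf hne'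
      simp only [colMin] at hw
      omega
  · rw [if_neg hf] at hσ'
    simp at hσ'
end DetPkg

section ProdPkg
open MvPolynomial
open scoped Classical

variable {n : ℕ}

/-- predicate: `d` is a distinguished exponent of `f` (nonzero coeff, unique
minimal weight in the support). -/
def Distinguished (f : MvPolynomial (Fin n × Fin n) ℂ) (d : (Fin n × Fin n) →₀ ℕ) : Prop :=
  coeff d f ≠ 0 ∧ ∀ e ∈ f.support, Wt d ≤ Wt e ∧ (Wt e = Wt d → e = d)

lemma Distinguished.mul {f g : MvPolynomial (Fin n × Fin n) ℂ}
    {d d' : (Fin n × Fin n) →₀ ℕ} (hf : Distinguished f d) (hg : Distinguished g d') :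
    Distinguished (f * g) (d + d') := by
  obtain ⟨hfc, hfs⟩ := hf
  obtain ⟨hgc, hgs⟩ := hg
  have key : ∀ x ∈ Finset.HasAntidiagonal.antidiagonal (d + d'),
      coeff x.1 f * coeff x.2 g ≠ 0 → x = (d, d') := by
    rintro ⟨u, v⟩ hx hne
    rw [Finset.HasAntidiagonal.mem_antidiagonal] at hx
    have hu : u ∈ f.support := by
      rw [MvPolynomial.mem_support_iff]; intro hz; rw [hz, zero_mul] at hne; exact hne rfl
    have hv : v ∈ g.support := by
      rw [MvPolynomial.mem_support_iff]; intro hz; rw [hz, mul_zero] at hne; exact hne rfl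
    have h1 := (hfs u hu).1
    have h2 := (hgs v hv).1
    have hsum : Wt u + Wt v = Wt d + Wt d' := by rw [← Wt_add, ← Wt_add, hx]
    have hu' : Wt u = Wt d := by omega
    have hv' : Wt v = Wt d' := by omega
    rw [(hfs u hu).2 hu', (hgs v hv).2 hv']
  constructor
  · rw [coeff_mul]
    rw [Finset.sum_eq_single_of_mem (d, d') (Finset.HasAntidiagonal.mem_antidiagonal.mpr rfl)]
    · exact mul_ne_zero hfc hgc
    · intro x hx hxne
      by_contra hc
      exact hxne (key x hx hc)
  · intro e he
    rw [MvPolynomial.mem_support_iff, coeff_mul] at he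
    obtain ⟨x, hx, hne⟩ := Finset.exists_ne_zero_of_sum_ne_zero he
    have hu : x.1 ∈ f.support := by
      rw [MvPolynomial.mem_support_iff]; intro hz; rw [hz, zero_mul] at hne; exact hne rfl
    have hv : x.2 ∈ g.support := by
      rw [MvPolynomial.mem_support_iff]; intro hz; rw [hz, mul_zero] at hne; exact hne rfl
    rw [Finset.HasAntidiagonal.mem_antidiagonal] at hx
    have hWe : Wt e = Wt x.1 + Wt x.2 := by rw [← Wt_add, hx]
    have h1 := (hfs x.1 hu).1
    have h2 := (hgs x.2 hv).1
    constructor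
    · rw [Wt_add]; omega
    · intro hEq
      rw [Wt_add] at hEq
      have hu' : Wt x.1 = Wt d := by omega
      have hv' : Wt x.2 = Wt d' := by omega
      rw [← hx, (hfs x.1 hu).2 hu', (hgs x.2 hv).2 hv']

lemma Distinguished.one : Distinguished (1 : MvPolynomial (Fin n × Fin n) ℂ) 0 := by
  constructor
  · simp
  · intro e he
    have he0 : e = 0 := by
      rw [MvPolynomial.mem_support_iff] at he
      by_contra hne
      rw [show (1 : MvPolynomial (Fin n × Fin n) ℂ) = C 1 from rfl,
        MvPolynomial.coeff_C, if_neg (fun hc => hne hc.symm)] at he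
      exact he rfl
    subst he0
    simp

lemma Distinguished.prod {ι : Type*} (t : Finset ι) (f : ι → MvPolynomial (Fin n × Fin n) ℂ)
    (d : ι → (Fin n × Fin n) →₀ ℕ) (H : ∀ j ∈ t, Distinguished (f j) (d j)) :
    Distinguished (∏ j ∈ t, f j) (∑ j ∈ t, d j) := by
  classical
  induction t using Finset.cons_induction with
  | empty => simpa using Distinguished.one
  | cons a t ha ih =>
    rw [Finset.prod_cons, Finset.sum_cons]
    exact (H a (Finset.mem_cons_self a t)).mul
      (ih fun j hj => H j (Finset.mem_cons_of_mem hj))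
end ProdPkg

section Assembly
open MvPolynomial
open scoped Classical

variable {n : ℕ}

theorem dets_linearIndependent_of_avoids' (D : Fin n → Finset (Fin n))
    (hav : Avoids D) (a : MvPolynomial (Fin n) ℂ) :
    LinearIndependent ℂ
      (fun C : {C : Fin n → Finset (Fin n) //
          (∀ j, Gale (C j) (D j)) ∧ xmon C = a} =>
        diagDet C.1 D) := by
  classical
  set ι := {C : Fin n → Finset (Fin n) // (∀ j, Gale (C j) (D j)) ∧ xmon C = a} with hι
  -- per-column data
  have hcard : ∀ (C : ι) (j : Fin n), (C.1 j).card = (D j).card := fun C j => (C.2.1 j).choose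
  have hId : ∀ (C : ι) (j : Fin n),
      Feas (rv (C.1 j)) (sv (C.1 j) (D j) (hcard C j)) 1 := by
    intro C j i
    have := (C.2.1 j).choose_spec i
    simpa [rv, sv, Feas] using this
  -- distinguished exponents
  set mexp : ι → ((Fin n × Fin n) →₀ ℕ) :=
    fun C => ∑ j, colExp (C.1 j) (D j) (hcard C j) (hId C j) with hmexp
  have hdist : ∀ C : ι, Distinguished (diagDet C.1 D) (mexp C) := by
    intro C
    rw [diagDet, hmexp]
    exact Distinguished.prod Finset.univ _ _ (fun j _ =>
      ⟨colDet_coeff_ne_zero (C.1 j) (D j) (hcard C j) (hId C j),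
       fun e he => colDet_support_wt (C.1 j) (D j) (hcard C j) (hId C j) he⟩)
  -- avoidance, symmetric form
  have avd : ∀ j j' : Fin n, j ≠ j' → ∀ x e : Fin n, x < e → e ∈ D j → e ∈ D j' →
      x ∉ D j → x ∉ D j' → False := by
    intro j j' hne x e hxe hej hej' hxj hxj'
    rcases lt_or_gt_of_ne hne with hlt | hlt
    · exact hav ⟨x, e, j, j', hxe, hlt, hxj, hxj', hej, hej'⟩
    · exact hav ⟨x, e, j', j, hxe, hlt, hxj', hxj, hej', hej⟩
  -- transfer of pairs through equality of exponents
  have htrans : ∀ (C C' : ι), mexp C = mexp C' → ∀ (j : Fin n) (p : Fin n × Fin n),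
      ColPair (C.1 j) (D j) (hcard C j) (hId C j) p →
      ∃ j', ColPair (C'.1 j') (D j') (hcard C' j') (hId C' j') p := by
    intro C C' hm j p hp
    have h1 : mexp C p ≠ 0 := by
      rw [hmexp, Finsupp.finset_sum_apply]
      intro hz
      rw [Finset.sum_eq_zero_iff] at hz
      exact ((colExp_ne_iff (C.1 j) (D j) (hcard C j) (hId C j) p).mpr hp)
        (hz j (Finset.mem_univ j))
    rw [hm, hmexp, Finsupp.finset_sum_apply] at h1
    obtain ⟨j', _, hj'⟩ := Finset.exists_ne_zero_of_sum_ne_zero h1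
    exact ⟨j', (colExp_ne_iff (C'.1 j') (D j') (hcard C' j') (hId C' j') p).mp hj'⟩
  -- injectivity of mexp
  have hkey : ∀ (C C' : ι), mexp C = mexp C' → ∀ j, C.1 j ⊆ C'.1 j := by
    intro C C' hm j x hx
    obtain ⟨e, hpe⟩ := colPair_row_exists (C.1 j) (D j) (hcard C j) (hId C j) hx
    have hbasic := colPair_basic _ _ _ _ hpe
    simp only [] at hbasic
    rcases eq_or_lt_of_le hbasic.2.2 with heq | hlt
    · -- trivial pair (x, x); x ∈ D j
      subst heq
      have hxD : x ∈ D j := hbasic.2.1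
      obtain ⟨x'', hp''⟩ := colPair_slot_exists (C'.1 j) (D j) (hcard C' j) (hId C' j) hxD
      have hb'' := colPair_basic _ _ _ _ hp''
      simp only [] at hb''
      rcases eq_or_lt_of_le hb''.2.2 with heq'' | hlt''
      · exact heq'' ▸ hb''.1
      · exfalso
        -- x'' < x, nontrivial pair of column j in C'-system; transfer back
        have hnx'' : x'' ∉ D j := colPair_nontrivial_not_mem _ _ _ _ hp'' hlt''
        obtain ⟨j₀, hp₀⟩ := htrans C' C hm.symm j (x'', x) hp''
        have hb₀ := colPair_basic _ _ _ _ hp₀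
        simp only [] at hb₀
        have hnx₀ : x'' ∉ D j₀ := colPair_nontrivial_not_mem _ _ _ _ hp₀ hlt''
        by_cases hj₀ : j₀ = j
        · subst hj₀
          have heq2 := colPair_slot_uniq _ _ _ _ hp₀ hpe
          exact absurd heq2 (ne_of_lt hlt'')
        · exact avd j₀ j hj₀ x'' x hlt'' hb₀.2.1 hxD hnx₀ hnx''
    · -- nontrivial pair (x, e)
      have hnx : x ∉ D j := colPair_nontrivial_not_mem _ _ _ _ hpe hlt
      obtain ⟨j', hp'⟩ := htrans C C' hm j (x, e) hpe
      have hb' := colPair_basic _ _ _ _ hp'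
      simp only [] at hb'
      have hnx' : x ∉ D j' := colPair_nontrivial_not_mem _ _ _ _ hp' hlt
      by_cases hj' : j' = j
      · subst hj'
        exact hb'.1
      · exact absurd (avd j' j hj' x e hlt hb'.2.1 hbasic.2.1 hnx' hnx) id
  have hinj : ∀ C C' : ι, mexp C = mexp C' → C = C' := by
    intro C C' hm
    apply Subtype.ext
    funext j
    exact Finset.Subset.antisymm (hkey C C' hm j) (hkey C' C hm.symm j)
  -- final: linear independence via distinguished monomials
  rw [linearIndependent_iff]
  intro l hl
  by_contra hlne
  have hsupp : l.support.Nonempty := Finsupp.support_nonempty_iff.mpr hlne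
  obtain ⟨i₀, hi₀, hmin⟩ := Finset.exists_min_image l.support (fun i => Wt (mexp i)) hsupp
  have hco : coeff (mexp i₀) (Finsupp.linearCombination ℂ
      (fun C : ι => diagDet C.1 D) l) = 0 := by rw [hl]; simp
  rw [Finsupp.linearCombination_apply, Finsupp.sum, coeff_sum] at hco
  have hterm : ∀ i ∈ l.support, i ≠ i₀ →
      coeff (mexp i₀) (l i • diagDet i.1 D) = 0 := by
    intro i hi hne
    rw [coeff_smul]
    have hz : coeff (mexp i₀) (diagDet i.1 D) = 0 := by
      by_contra hc
      have hmem : mexp i₀ ∈ (diagDet i.1 D).support := MvPolynomial.mem_support_iff.mpr hc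
      have h1 := (hdist i).2 (mexp i₀) hmem
      have h2 := hmin i hi
      have heqw : Wt (mexp i₀) = Wt (mexp i) := le_antisymm (by omega) h1.1
      exact hne (hinj i₀ i (h1.2 heqw)).symm
    rw [hz, smul_zero]
  rw [Finset.sum_eq_single_of_mem i₀ hi₀ hterm, coeff_smul] at hco
  have := (hdist i₀).1
  have hl0 : l i₀ = 0 := by
    rcases smul_eq_zero.mp hco with h | h
    · exact h
    · exact absurd h this
  exact (Finsupp.mem_support_iff.mp hi₀) hl0
end Assembly

/-- if `D` avoids the forbidden configuration, then for every monomial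
`x^a` the family of polynomials `det(Y^C_D)` over the diagrams `C ≤ D` with `x^C = x^a`
is linearly independent over `ℂ`. -/
theorem dets_linearIndependent_of_avoids {n : ℕ} (D : Fin n → Finset (Fin n))
    (hav : Avoids D) (a : MvPolynomial (Fin n) ℂ) :
    LinearIndependent ℂ
      (fun C : {C : Fin n → Finset (Fin n) //
          (∀ j, Gale (C j) (D j)) ∧ xmon C = a} =>
        diagDet C.1 D) :=
  dets_linearIndependent_of_avoids' D hav a
end Poly
end Expp
end

section
/- If a diagram D ⊆ [n]×[n] contains two rows i_1 < i_2 and two columns j_1 < j_2 such that boxes (i_1,j_1), (i_1,j_2) are absent from D while (i_2,j_1), (i_2,j_2) are present in D, then one can choose such i_1 < i_2 and j_1 < j_2 'minimally', i.e., additionally satisfying: for every i with i_1 < i < i_2, exactly one of the boxes (i,j_1), (i,j_2) belongs to D. -/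
/-! Take `b'` to be the first row after `i₁` (up to `i₂`) meeting both columns, and then `a'` the
last row before `b'` (from `i₁` on) meeting neither. A row strictly between `a'` and `b'` cannot
meet both columns, by the choice of `b'`, nor neither, by the choice of `a'`. -/

theorem exists_between_forall_iff_not {α : Type*} [LinearOrder α] [LocallyFiniteOrder α]
    {p q : α → Prop} {a b : α} (hab : a < b) (ha : ¬p a ∧ ¬q a) (hb : p b ∧ q b) :
    ∃ a' b', a' < b' ∧ (¬p a' ∧ ¬q a') ∧ (p b' ∧ q b') ∧
      ∀ i, a' < i → i < b' → (p i ↔ ¬q i) := by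
  obtain ⟨b', ⟨⟨hab', hb'b⟩, hb'⟩, hb'_min⟩ :=
    ((Set.finite_Ioc a b).inter_of_left {x | p x ∧ q x}).exists_minimal ⟨b, ⟨hab, le_rfl⟩, hb⟩
  obtain ⟨a', ⟨⟨haa', ha'b'⟩, ha'⟩, ha'_max⟩ :=
    ((Set.finite_Ico a b').inter_of_left {x | ¬p x ∧ ¬q x}).exists_maximal ⟨a, ⟨le_rfl, hab'⟩, ha⟩
  refine ⟨a', b', ha'b', ha', hb', fun i hi₁ hi₂ => ?_⟩
  have not_both : ¬(p i ∧ q i) := fun hi =>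
    hi₂.not_ge (hb'_min ⟨⟨haa'.trans_lt hi₁, hi₂.le.trans hb'b⟩, hi⟩ hi₂.le)
  have not_neither : ¬(¬p i ∧ ¬q i) := fun hi =>
    hi₁.not_ge (ha'_max ⟨⟨haa'.trans hi₁.le, hi₂⟩, hi⟩ hi₁.le)
  tauto

/-- if a diagram `D` contains the configuration (rows `i₁ < i₂`, columns
`j₁ < j₂` with `(i₁,j₁),(i₁,j₂) ∉ D` and `(i₂,j₁),(i₂,j₂) ∈ D`), then it contains a
minimal one: additionally, for each `i` with `i₁ < i < i₂`, exactly one of `(i,j₁)`,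
`(i,j₂)` is in `D`. -/
theorem exists_minimal_configuration {n : ℕ} (D : Fin n → Finset (Fin n))
    (h : ∃ i₁ i₂ j₁ j₂ : Fin n, i₁ < i₂ ∧ j₁ < j₂ ∧
      i₁ ∉ D j₁ ∧ i₁ ∉ D j₂ ∧ i₂ ∈ D j₁ ∧ i₂ ∈ D j₂) :
    ∃ i₁ i₂ j₁ j₂ : Fin n, i₁ < i₂ ∧ j₁ < j₂ ∧
      i₁ ∉ D j₁ ∧ i₁ ∉ D j₂ ∧ i₂ ∈ D j₁ ∧ i₂ ∈ D j₂ ∧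
      ∀ i : Fin n, i₁ < i → i < i₂ → (i ∈ D j₁ ↔ i ∉ D j₂) := by
  obtain ⟨i₁, i₂, j₁, j₂, hi, hj, h₁j₁, h₁j₂, h₂j₁, h₂j₂⟩ := h
  obtain ⟨a, b, hab, ⟨haj₁, haj₂⟩, ⟨hbj₁, hbj₂⟩, hbetween⟩ :=
    exists_between_forall_iff_not (p := (· ∈ D j₁)) (q := (· ∈ D j₂)) hi
      ⟨h₁j₁, h₁j₂⟩ ⟨h₂j₁, h₂j₂⟩
  exact ⟨a, b, j₁, j₂, hab, hj, haj₁, haj₂, hbj₁, hbj₂, hbetween⟩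
end

section
/- Let D = {d_1 < ... < d_{s+1}} and P = {p_1 < ... < p_{t+1}} be subsets of {i_1+1, i_1+2, ..., i_2} with D ∩ P = {i_2} and D ∪ P = {i_1+1, ..., i_2} (so s + t + 1 = i_2 - i_1). Let Y be the generic upper-triangular matrix. Then there exist at least two distinct pairs (R, R̄) with R ⊆ {i_1, i_1+1, ..., i_2}, |R| = s+1, R̄ = {i_1,...,i_2} \ R, such that det(Y^R_D) · det(Y^{R̄}_P) ≠ 0, and the collection of all such nonzero products {det(Y^R_D) · det(Y^{R̄}_P)} satisfies a nontrivial ℂ-linear relation Σ_R ± det(Y^R_D) · det(Y^{R̄}_P) = 0. -/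
open Finset

namespace LapAux

variable {A : Type*} [CommRing A] {k l : ℕ}

lemma card_compl_of_card {R : Finset (Fin (k+l))} (h : R.card = k) : Rᶜ.card = l := by
  simp [Finset.card_compl, h]

/-- The permutation of `Fin (k+l)` sending the first `k` indices increasingly onto `R`
and the last `l` increasingly onto `Rᶜ`. -/
noncomputable def rho (R : Finset (Fin (k+l))) (h : R.card = k) : Equiv.Perm (Fin (k+l)) :=
  Equiv.ofBijective
    (fun x => Sum.elim (R.orderEmbOfFin h) ((Rᶜ).orderEmbOfFin (card_compl_of_card h))
        (finSumFinEquiv.symm x))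
    (by
      refine Finite.injective_iff_bijective.mp ?_
      intro x y hxy
      obtain ⟨u, rfl⟩ := finSumFinEquiv.surjective x
      obtain ⟨v, rfl⟩ := finSumFinEquiv.surjective y
      simp only [Equiv.symm_apply_apply] at hxy
      congr 1
      cases u with
      | inl a => cases v with
        | inl b =>
          simp only [Sum.elim_inl] at hxy
          exact congrArg Sum.inl ((R.orderEmbOfFin h).injective hxy)
        | inr b =>
          exfalso
          simp only [Sum.elim_inl, Sum.elim_inr] at hxy
          have h1 := R.orderEmbOfFin_mem h a
          have h2 := (Rᶜ).orderEmbOfFin_mem (card_compl_of_card h) b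
          rw [hxy] at h1
          exact (Finset.mem_compl.mp h2) h1
      | inr a => cases v with
        | inl b =>
          exfalso
          simp only [Sum.elim_inl, Sum.elim_inr] at hxy
          have h1 := R.orderEmbOfFin_mem h b
          have h2 := (Rᶜ).orderEmbOfFin_mem (card_compl_of_card h) a
          rw [hxy] at h2
          exact (Finset.mem_compl.mp h2) h1
        | inr b =>
          simp only [Sum.elim_inr] at hxy
          exact congrArg Sum.inr (((Rᶜ).orderEmbOfFin (card_compl_of_card h)).injective hxy))

@[simp] lemma rho_castAdd (R : Finset (Fin (k+l))) (h : R.card = k) (a : Fin k) :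
    rho R h (Fin.castAdd l a) = R.orderEmbOfFin h a := by
  simp [rho, Equiv.ofBijective]

@[simp] lemma rho_natAdd (R : Finset (Fin (k+l))) (h : R.card = k) (b : Fin l) :
    rho R h (Fin.natAdd k b) = (Rᶜ).orderEmbOfFin (card_compl_of_card h) b := by
  simp [rho, Equiv.ofBijective]

lemma card_of_mem {R : Finset (Fin (k+l))} (h : R ∈ (univ : Finset (Fin (k+l))).powersetCard k) :
    R.card = k := (Finset.mem_powersetCard.mp h).2

def psi (τ₁ : Equiv.Perm (Fin k)) (τ₂ : Equiv.Perm (Fin l)) : Equiv.Perm (Fin (k+l)) :=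
  finSumFinEquiv.permCongr (Equiv.sumCongr τ₁ τ₂)

@[simp] lemma psi_castAdd (τ₁ : Equiv.Perm (Fin k)) (τ₂ : Equiv.Perm (Fin l)) (a : Fin k) :
    psi τ₁ τ₂ (Fin.castAdd l a) = Fin.castAdd l (τ₁ a) := by
  simp [psi, Equiv.permCongr_apply]

@[simp] lemma psi_natAdd (τ₁ : Equiv.Perm (Fin k)) (τ₂ : Equiv.Perm (Fin l)) (b : Fin l) :
    psi τ₁ τ₂ (Fin.natAdd k b) = Fin.natAdd k (τ₂ b) := by
  simp [psi, Equiv.permCongr_apply]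

/-- Generalized Laplace expansion of the determinant along the first `k` columns. -/
theorem laplace (M : Matrix (Fin (k+l)) (Fin (k+l)) A) :
    M.det = ∑ R ∈ ((univ : Finset (Fin (k+l))).powersetCard k).attach,
      ((Equiv.Perm.sign (rho R.1 (card_of_mem R.2)) : ℤ) : A) *
        ((Matrix.of fun a b : Fin k =>
            M (R.1.orderEmbOfFin (card_of_mem R.2) a) (Fin.castAdd l b)).det *
         (Matrix.of fun a b : Fin l =>
            M ((R.1ᶜ).orderEmbOfFin (card_compl_of_card (card_of_mem R.2)) a)
              (Fin.natAdd k b)).det) := by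
  classical
  set pows := (univ : Finset (Fin (k+l))).powersetCard k with hpows
  set T := {R // R ∈ pows} × Equiv.Perm (Fin k) × Equiv.Perm (Fin l) with hT
  set Φ : T → Equiv.Perm (Fin (k+l)) :=
    fun x => rho x.1.1 (card_of_mem x.1.2) * psi x.2.1 x.2.2 with hΦdef
  have Φ_castAdd : ∀ (x : T) (a : Fin k),
      Φ x (Fin.castAdd l a) = x.1.1.orderEmbOfFin (card_of_mem x.1.2) (x.2.1 a) := by
    intro x a; simp [hΦdef, Equiv.Perm.mul_apply]
  have Φ_natAdd : ∀ (x : T) (b : Fin l),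
      Φ x (Fin.natAdd k b) = (x.1.1ᶜ).orderEmbOfFin (card_compl_of_card (card_of_mem x.1.2))
        (x.2.2 b) := by
    intro x b; simp [hΦdef, Equiv.Perm.mul_apply]
  have hset : ∀ x : T, x.1.1 = Finset.image (fun a : Fin k => Φ x (Fin.castAdd l a)) univ := by
    intro x
    ext w
    simp only [Finset.mem_image, Finset.mem_univ, true_and]
    constructor
    · intro hw
      have : w ∈ Set.range (x.1.1.orderEmbOfFin (card_of_mem x.1.2)) := by
        rw [Finset.range_orderEmbOfFin]; exact_mod_cast hw
      obtain ⟨c, hc⟩ := this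
      exact ⟨x.2.1⁻¹ c, by rw [Φ_castAdd]; simpa using hc⟩
    · rintro ⟨a, rfl⟩
      rw [Φ_castAdd]
      exact Finset.orderEmbOfFin_mem _ _ _
  have hΦinj : Function.Injective Φ := by
    intro x y hxy
    have hR : x.1 = y.1 := by
      apply Subtype.ext
      rw [hset x, hset y, hxy]
    obtain ⟨⟨Rx, hRx⟩, τ₁, τ₂⟩ := x
    obtain ⟨⟨Ry, hRy⟩, σ₁, σ₂⟩ := y
    simp only [Subtype.mk.injEq] at hR
    subst hR
    simp only [hΦdef] at hxy
    have hψ : psi τ₁ τ₂ = psi σ₁ σ₂ := mul_left_cancel hxy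
    have h1 : τ₁ = σ₁ := by
      ext a
      have := congrArg (fun p => (p (Fin.castAdd l a) : Fin (k+l))) hψ
      simpa [Fin.ext_iff] using this
    have h2 : τ₂ = σ₂ := by
      ext b
      have := congrArg (fun p => (p (Fin.natAdd k b) : Fin (k+l))) hψ
      simp only [psi_natAdd] at this
      simpa [Fin.ext_iff] using this
    simp [h1, h2]
  have hΦsurj : Function.Surjective Φ := by
    intro σ
    set R : Finset (Fin (k+l)) := Finset.image (fun a : Fin k => σ (Fin.castAdd l a)) univ with hRdef
    have hcastinj : Function.Injective (fun a : Fin k => σ (Fin.castAdd l a)) := by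
      intro a b hab
      have := σ.injective hab
      simpa [Fin.ext_iff] using this
    have hRcard : R.card = k := by
      rw [hRdef, Finset.card_image_of_injective _ hcastinj, Finset.card_univ, Fintype.card_fin]
    have hRmem : R ∈ pows := by
      rw [hpows, Finset.mem_powersetCard]
      exact ⟨Finset.subset_univ _, hRcard⟩
    set π : Equiv.Perm (Fin (k+l)) := (rho R hRcard)⁻¹ * σ with hπdef
    have hπcast : ∀ a : Fin k, ((π (Fin.castAdd l a)) : ℕ) < k := by
      intro a
      have hmem : σ (Fin.castAdd l a) ∈ R := by
        rw [hRdef]; exact Finset.mem_image.mpr ⟨a, Finset.mem_univ a, rfl⟩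
      have : σ (Fin.castAdd l a) ∈ Set.range (R.orderEmbOfFin hRcard) := by
        rw [Finset.range_orderEmbOfFin]; exact_mod_cast hmem
      obtain ⟨c, hc⟩ := this
      have : π (Fin.castAdd l a) = Fin.castAdd l c := by
        rw [hπdef, Equiv.Perm.mul_apply, ← hc, ← rho_castAdd R hRcard c, Equiv.Perm.inv_def, Equiv.symm_apply_apply]
      rw [this]; simpa using c.2
    set g : Fin k → Fin k := fun a => ⟨(π (Fin.castAdd l a) : ℕ), hπcast a⟩ with hgdef
    have hg : ∀ a, Fin.castAdd l (g a) = π (Fin.castAdd l a) := by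
      intro a; simp [hgdef, Fin.ext_iff]
    have hginj : Function.Injective g := by
      intro a b hab
      have : π (Fin.castAdd l a) = π (Fin.castAdd l b) := by
        rw [← hg, ← hg, hab]
      have := π.injective this
      simpa [Fin.ext_iff] using this
    have hgbij := Finite.injective_iff_bijective.mp hginj
    have hπnat : ∀ b : Fin l, k ≤ ((π (Fin.natAdd k b)) : ℕ) := by
      intro b
      by_contra hcon
      push_neg at hcon
      obtain ⟨a, ha⟩ := hgbij.surjective ⟨(π (Fin.natAdd k b) : ℕ), hcon⟩
      have : π (Fin.castAdd l a) = π (Fin.natAdd k b) := by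
        rw [← hg, ha]; simp [Fin.ext_iff]
      have := π.injective this
      have hv := congrArg (Fin.val) this
      simp [Fin.ext_iff] at hv
      omega
    set gg : Fin l → Fin l := fun b => ⟨(π (Fin.natAdd k b) : ℕ) - k, by
      have h1 := (π (Fin.natAdd k b)).2
      have h2 := hπnat b
      omega⟩ with hggdef
    have hgg : ∀ b, Fin.natAdd k (gg b) = π (Fin.natAdd k b) := by
      intro b
      have h2 := hπnat b
      apply Fin.ext
      simp only [Fin.coe_natAdd, hggdef]
      omega
    have hgginj : Function.Injective gg := by
      intro a b hab
      have : π (Fin.natAdd k a) = π (Fin.natAdd k b) := by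
        rw [← hgg, ← hgg, hab]
      have := π.injective this
      simpa [Fin.ext_iff] using this
    have hggbij := Finite.injective_iff_bijective.mp hgginj
    refine ⟨⟨⟨R, hRmem⟩, Equiv.ofBijective g hgbij, Equiv.ofBijective gg hggbij⟩, ?_⟩
    ext x
    refine Fin.addCases (fun a => ?_) (fun b => ?_) x
    · have : Φ (⟨⟨R, hRmem⟩, Equiv.ofBijective g hgbij, Equiv.ofBijective gg hggbij⟩)
          (Fin.castAdd l a) = rho R hRcard (Fin.castAdd l (g a)) := by
        simp [hΦdef, Equiv.Perm.mul_apply, Equiv.ofBijective]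
      rw [this, hg, hπdef, Equiv.Perm.mul_apply, Equiv.Perm.inv_def, Equiv.apply_symm_apply]
    · have : Φ (⟨⟨R, hRmem⟩, Equiv.ofBijective g hgbij, Equiv.ofBijective gg hggbij⟩)
          (Fin.natAdd k b) = rho R hRcard (Fin.natAdd k (gg b)) := by
        simp [hΦdef, Equiv.Perm.mul_apply, Equiv.ofBijective]
      rw [this, hgg, hπdef, Equiv.Perm.mul_apply, Equiv.Perm.inv_def, Equiv.apply_symm_apply]
  rw [Matrix.det_apply']
  have key := Fintype.sum_bijective Φ ⟨hΦinj, hΦsurj⟩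
    (fun x : T => ((Equiv.Perm.sign (rho x.1.1 (card_of_mem x.1.2)) : ℤ) : A) *
      ((((Equiv.Perm.sign x.2.1 : ℤ) : A) *
          ∏ a, M (x.1.1.orderEmbOfFin (card_of_mem x.1.2) (x.2.1 a)) (Fin.castAdd l a)) *
       (((Equiv.Perm.sign x.2.2 : ℤ) : A) *
          ∏ b, M ((x.1.1ᶜ).orderEmbOfFin (card_compl_of_card (card_of_mem x.1.2)) (x.2.2 b))
            (Fin.natAdd k b))))
    (fun σ => ((Equiv.Perm.sign σ : ℤ) : A) * ∏ i, M (σ i) i)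
    (by
      intro x
      have hsign : ((Equiv.Perm.sign (Φ x) : ℤ) : A) =
          ((Equiv.Perm.sign (rho x.1.1 (card_of_mem x.1.2)) : ℤ) : A) *
          (((Equiv.Perm.sign x.2.1 : ℤ) : A) * ((Equiv.Perm.sign x.2.2 : ℤ) : A)) := by
        rw [hΦdef]
        simp only [Equiv.Perm.sign_mul, psi, Equiv.Perm.sign_permCongr,
          Equiv.Perm.sign_sumCongr, Units.val_mul, Int.cast_mul]
      have hprod : (∏ i, M (Φ x i) i) =
          (∏ a, M (x.1.1.orderEmbOfFin (card_of_mem x.1.2) (x.2.1 a)) (Fin.castAdd l a)) *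
          (∏ b, M ((x.1.1ᶜ).orderEmbOfFin (card_compl_of_card (card_of_mem x.1.2)) (x.2.2 b))
            (Fin.natAdd k b)) := by
        rw [Fin.prod_univ_add (f := fun i => M (Φ x i) i)]
        congr 1
        · exact Finset.prod_congr rfl fun a _ => by rw [Φ_castAdd]
        · exact Finset.prod_congr rfl fun b _ => by rw [Φ_natAdd]
      rw [hprod, hsign]; ring)
  rw [← key]
  rw [Fintype.sum_prod_type]
  rw [← Finset.attach_eq_univ]
  refine Finset.sum_congr rfl fun R _ => ?_
  rw [Fintype.sum_prod_type]
  rw [Matrix.det_apply', Matrix.det_apply', Finset.sum_mul_sum, Finset.mul_sum]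
  refine Finset.sum_congr rfl fun τ₁ _ => ?_
  rw [Finset.mul_sum]
  refine Finset.sum_congr rfl fun τ₂ _ => ?_
  simp only [Matrix.of_apply]

lemma colDet_eq_of_card {n q : ℕ} {X S : Finset (Fin n)} (hX : X.card = q) (hS : S.card = q) :
    colDet X S = (Matrix.of fun a b : Fin q =>
      Ygen n (X.orderEmbOfFin hX a) (S.orderEmbOfFin hS b)).det := by
  subst hX
  have h : X.card = S.card := hS.symm
  rw [colDet, dif_pos h]

lemma colDet_ne_zero {n q : ℕ} {R S : Finset (Fin n)} (hR : R.card = q) (hS : S.card = q)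
    (hle : ∀ i : Fin q, R.orderEmbOfFin hR i ≤ S.orderEmbOfFin hS i) :
    colDet R S ≠ 0 := by
  classical
  rw [colDet_eq_of_card hR hS]
  intro hzero
  set v : Fin n × Fin n → ℂ := fun p =>
    if ∃ a : Fin q, p = (R.orderEmbOfFin hR a, S.orderEmbOfFin hS a) then 1 else 0 with hv
  have hvval : ∀ x y : Fin n, v (x, y) =
      if ∃ a : Fin q, (x, y) = (R.orderEmbOfFin hR a, S.orderEmbOfFin hS a) then 1 else 0 :=
    fun _ _ => rfl
  have h0 := congrArg (MvPolynomial.eval v) hzero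
  rw [map_zero, RingHom.map_det, RingHom.mapMatrix_apply] at h0
  have hone : (Matrix.of fun a b : Fin q =>
      Ygen n (R.orderEmbOfFin hR a) (S.orderEmbOfFin hS b)).map (MvPolynomial.eval v) = 1 := by
    ext a b
    simp only [Matrix.map_apply, Matrix.of_apply, Ygen]
    by_cases hab : a = b
    · subst hab
      rw [if_pos (hle a), MvPolynomial.eval_X, hvval, if_pos ⟨a, rfl⟩, Matrix.one_apply_eq]
    · rw [Matrix.one_apply_ne hab]
      by_cases hcase : R.orderEmbOfFin hR a ≤ S.orderEmbOfFin hS b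
      · rw [if_pos hcase, MvPolynomial.eval_X, hvval, if_neg]
        rintro ⟨c, hc⟩
        simp only [Prod.mk.injEq] at hc
        exact hab (((R.orderEmbOfFin hR).injective hc.1).trans
          ((S.orderEmbOfFin hS).injective hc.2).symm)
      · rw [if_neg hcase, map_zero]
  rw [hone, Matrix.det_one] at h0
  exact (one_ne_zero : (1:ℂ) ≠ 0) h0

lemma insert_erase_card {n m : ℕ} {S : Finset (Fin n)} (hS : S.card = m + 1) {a z : Fin n}
    (hz : z ∈ S) (ha : ∀ x ∈ S, a < x) :
    (insert a (S.erase z)).card = m + 1 := by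
  have hanotin : a ∉ S.erase z := fun h => lt_irrefl a (ha a (Finset.mem_of_mem_erase h))
  rw [Finset.card_insert_of_notMem hanotin, Finset.card_erase_of_mem hz, hS]; omega

lemma insert_erase_gale {n m : ℕ} {S : Finset (Fin n)} (hS : S.card = m + 1) {a z : Fin n}
    (hz : z ∈ S) (hztop : ∀ x ∈ S, x ≤ z) (ha : ∀ x ∈ S, a < x) :
    ∀ i : Fin (m + 1), (insert a (S.erase z)).orderEmbOfFin (insert_erase_card hS hz ha) i ≤
      S.orderEmbOfFin hS i := by
  have herase : (S.erase z).card = m := by rw [Finset.card_erase_of_mem hz, hS]; omega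
  have hcast : ∀ j : Fin m, (S.erase z).orderEmbOfFin herase j =
      S.orderEmbOfFin hS (Fin.castSucc j) := by
    have hmem : ∀ j : Fin m, S.orderEmbOfFin hS (Fin.castSucc j) ∈ S.erase z := by
      intro j
      refine Finset.mem_erase.mpr ⟨?_, Finset.orderEmbOfFin_mem _ _ _⟩
      have hlast : S.orderEmbOfFin hS (Fin.castSucc j) < S.orderEmbOfFin hS (Fin.last m) :=
        (S.orderEmbOfFin hS).strictMono (by
          simp only [Fin.lt_def, Fin.coe_castSucc, Fin.val_last]; exact j.2)
      have : S.orderEmbOfFin hS (Fin.last m) ≤ z :=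
        hztop _ (Finset.orderEmbOfFin_mem _ _ _)
      exact ne_of_lt (lt_of_lt_of_le hlast this)
    have := Finset.orderEmbOfFin_unique herase hmem
      (((S.orderEmbOfFin hS).strictMono).comp Fin.strictMono_castSucc)
    intro j
    exact (congrFun this j).symm
  set f : Fin (m + 1) → Fin n :=
    fun i => Fin.cases a (fun j => (S.erase z).orderEmbOfFin herase j) i with hf
  have hfmem : ∀ i, f i ∈ insert a (S.erase z) := by
    intro i
    refine Fin.cases ?_ (fun j => ?_) i
    · simp [hf]
    · simp only [hf, Fin.cases_succ]
      exact Finset.mem_insert_of_mem (Finset.orderEmbOfFin_mem _ _ _)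
  have hfmono : StrictMono f := by
    intro i j hij
    rcases Fin.eq_zero_or_eq_succ j with rfl | ⟨j', rfl⟩
    · exact absurd hij (Fin.not_lt_zero i)
    rcases Fin.eq_zero_or_eq_succ i with rfl | ⟨i', rfl⟩
    · simp only [hf, Fin.cases_zero, Fin.cases_succ]
      exact ha _ (Finset.mem_of_mem_erase (Finset.orderEmbOfFin_mem _ _ _))
    · simp only [hf, Fin.cases_succ]
      refine ((S.erase z).orderEmbOfFin herase).strictMono ?_
      simp only [Fin.lt_def, Fin.val_succ] at hij ⊢
      omega
  have hfeq := Finset.orderEmbOfFin_unique (insert_erase_card hS hz ha) hfmem hfmono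
  intro i
  rw [← congrFun hfeq i]
  refine Fin.cases ?_ (fun j => ?_) i
  · simp only [hf, Fin.cases_zero]
    exact le_of_lt (ha _ (Finset.orderEmbOfFin_mem _ _ _))
  · simp only [hf, Fin.cases_succ]
    rw [hcast j]
    exact (S.orderEmbOfFin hS).monotone (by
      simp only [Fin.le_def, Fin.coe_castSucc, Fin.val_succ]; omega)

end LapAux

/-- with `D, P ⊆ {i₁+1,…,i₂}`, `D ∩ P = {i₂}`, `D ∪ P = {i₁+1,…,i₂}`,
`|D| = s+1`, `|P| = t+1`, at least two of the products `det(Y^R_D)·det(Y^{R̄}_P)`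
(over `R ⊆ {i₁,…,i₂}` of size `s+1`, with `R̄` the complement in `{i₁,…,i₂}`) are
nonzero, and the full collection satisfies a signed linear relation
`∑_R ± det(Y^R_D)·det(Y^{R̄}_P) = 0`. -/
theorem laplace_relation_for_two_columns {n : ℕ} (i₁ i₂ : Fin n) (hlt : i₁ < i₂)
    (s t : ℕ) (D P : Finset (Fin n))
    (hDcard : D.card = s + 1) (hPcard : P.card = t + 1)
    (hint : D ∩ P = {i₂}) (hun : D ∪ P = Finset.Ioc i₁ i₂) :
    (∃ R₁ R₂ : Finset (Fin n), R₁ ≠ R₂ ∧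
      R₁ ∈ (Finset.Icc i₁ i₂).powersetCard (s + 1) ∧
      R₂ ∈ (Finset.Icc i₁ i₂).powersetCard (s + 1) ∧
      colDet R₁ D * colDet (Finset.Icc i₁ i₂ \ R₁) P ≠ 0 ∧
      colDet R₂ D * colDet (Finset.Icc i₁ i₂ \ R₂) P ≠ 0) ∧
    ∃ ε : Finset (Fin n) → ℤ, (∀ R, ε R = 1 ∨ ε R = -1) ∧
      ∑ R ∈ (Finset.Icc i₁ i₂).powersetCard (s + 1),
        (ε R : MvPolynomial (Fin n × Fin n) ℂ) *
          (colDet R D * colDet (Finset.Icc i₁ i₂ \ R) P) = 0 := by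
  classical
  -- basic membership facts
  have hDP : D ⊆ Finset.Ioc i₁ i₂ := hun ▸ Finset.subset_union_left
  have hPP : P ⊆ Finset.Ioc i₁ i₂ := hun ▸ Finset.subset_union_right
  have hi₂DP : i₂ ∈ D ∩ P := by rw [hint]; exact Finset.mem_singleton_self i₂
  have hi₂D : i₂ ∈ D := (Finset.mem_inter.mp hi₂DP).1
  have hi₂P : i₂ ∈ P := (Finset.mem_inter.mp hi₂DP).2
  have hDlow : ∀ x ∈ D, i₁ < x := fun x hx => (Finset.mem_Ioc.mp (hDP hx)).1
  have hDhigh : ∀ x ∈ D, x ≤ i₂ := fun x hx => (Finset.mem_Ioc.mp (hDP hx)).2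
  have hPlow : ∀ x ∈ P, i₁ < x := fun x hx => (Finset.mem_Ioc.mp (hPP hx)).1
  have hPhigh : ∀ x ∈ P, x ≤ i₂ := fun x hx => (Finset.mem_Ioc.mp (hPP hx)).2
  have hIoc_card : (Finset.Ioc i₁ i₂).card = s + t + 1 := by
    have := Finset.card_union_add_card_inter D P
    rw [hun, hint, hDcard, hPcard, Finset.card_singleton] at this
    omega
  have hi₁Ioc : i₁ ∉ Finset.Ioc i₁ i₂ := by simp
  have hIcc_eq : Finset.Icc i₁ i₂ = insert i₁ (Finset.Ioc i₁ i₂) :=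
    (Finset.Ioc_insert_left hlt.le).symm
  have hIcc_card : (Finset.Icc i₁ i₂).card = (s + 1) + (t + 1) := by
    rw [hIcc_eq, Finset.card_insert_of_notMem hi₁Ioc, hIoc_card]; omega
  have hi₁Icc : i₁ ∈ Finset.Icc i₁ i₂ := Finset.mem_Icc.mpr ⟨le_refl _, hlt.le⟩
  have hIoc_sub_Icc : Finset.Ioc i₁ i₂ ⊆ Finset.Icc i₁ i₂ := Finset.Ioc_subset_Icc_self
  have hDIcc : D ⊆ Finset.Icc i₁ i₂ := hDP.trans hIoc_sub_Icc
  have hPIcc : P ⊆ Finset.Icc i₁ i₂ := hPP.trans hIoc_sub_Icc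
  have hi₁D : i₁ ∉ D := fun h => lt_irrefl i₁ (hDlow _ h)
  -- the two set identities for complements
  have hid1 : Finset.Icc i₁ i₂ \ D = insert i₁ (P.erase i₂) := by
    ext x
    simp only [Finset.mem_sdiff, Finset.mem_Icc, Finset.mem_insert, Finset.mem_erase]
    constructor
    · rintro ⟨⟨h1, h2⟩, hxD⟩
      rcases eq_or_lt_of_le h1 with heq | h1'
      · exact Or.inl heq.symm
      · refine Or.inr ⟨fun hx2 => hxD (hx2 ▸ hi₂D), ?_⟩
        have hxIoc : x ∈ Finset.Ioc i₁ i₂ := Finset.mem_Ioc.mpr ⟨h1', h2⟩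
        rw [← hun] at hxIoc
        rcases Finset.mem_union.mp hxIoc with h | h
        · exact absurd h hxD
        · exact h
    · rintro (rfl | ⟨hne, hxP⟩)
      · exact ⟨⟨le_refl _, hlt.le⟩, hi₁D⟩
      · refine ⟨⟨(hPlow _ hxP).le, hPhigh _ hxP⟩, fun hxD => hne ?_⟩
        have hmem : x ∈ D ∩ P := Finset.mem_inter.mpr ⟨hxD, hxP⟩
        rw [hint] at hmem
        exact Finset.mem_singleton.mp hmem
  have hid2 : Finset.Icc i₁ i₂ \ (insert i₁ (D.erase i₂)) = P := by
    ext x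
    simp only [Finset.mem_sdiff, Finset.mem_Icc, Finset.mem_insert, Finset.mem_erase]
    constructor
    · rintro ⟨⟨h1, h2⟩, hx⟩
      push_neg at hx
      obtain ⟨hxne, hx2⟩ := hx
      by_cases hxi2 : x = i₂
      · subst hxi2; exact hi₂P
      · have hxIoc : x ∈ Finset.Ioc i₁ i₂ :=
          Finset.mem_Ioc.mpr ⟨lt_of_le_of_ne h1 (Ne.symm hxne), h2⟩
        rw [← hun] at hxIoc
        rcases Finset.mem_union.mp hxIoc with h | h
        · exact absurd h (hx2 hxi2)
        · exact h
    · intro hxP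
      refine ⟨⟨(hPlow _ hxP).le, hPhigh _ hxP⟩, ?_⟩
      push_neg
      refine ⟨fun h => absurd (h ▸ hPlow _ hxP) (lt_irrefl _), fun hne hxD => hne ?_⟩
      have hmem : x ∈ D ∩ P := Finset.mem_inter.mpr ⟨hxD, hxP⟩
      rw [hint] at hmem
      exact Finset.mem_singleton.mp hmem
  constructor
  · -- existence of two distinct nonzero products
    refine ⟨D, insert i₁ (D.erase i₂), ?_, ?_, ?_, ?_, ?_⟩
    · intro h
      exact hi₁D (h ▸ Finset.mem_insert_self i₁ (D.erase i₂))
    · exact Finset.mem_powersetCard.mpr ⟨hDIcc, hDcard⟩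
    · refine Finset.mem_powersetCard.mpr ⟨?_, LapAux.insert_erase_card hDcard hi₂D hDlow⟩
      exact Finset.insert_subset hi₁Icc ((Finset.erase_subset _ _).trans hDIcc)
    · refine mul_ne_zero ?_ ?_
      · exact LapAux.colDet_ne_zero hDcard hDcard (fun i => le_refl _)
      · rw [hid1]
        exact LapAux.colDet_ne_zero (LapAux.insert_erase_card hPcard hi₂P hPlow) hPcard
          (LapAux.insert_erase_gale hPcard hi₂P hPhigh hPlow)
    · refine mul_ne_zero ?_ ?_
      · exact LapAux.colDet_ne_zero (LapAux.insert_erase_card hDcard hi₂D hDlow) hDcard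
          (LapAux.insert_erase_gale hDcard hi₂D hDhigh hDlow)
      · rw [hid2]
        exact LapAux.colDet_ne_zero hPcard hPcard (fun i => le_refl _)
  · -- the signed linear relation, via Laplace expansion
    set e := (Finset.Icc i₁ i₂).orderEmbOfFin hIcc_card with he
    set em : Fin ((s+1)+(t+1)) ↪ Fin n := e.toEmbedding with hem
    set cols : Fin ((s+1)+(t+1)) → Fin n := fun b =>
      Sum.elim (D.orderEmbOfFin hDcard) (P.orderEmbOfFin hPcard) (finSumFinEquiv.symm b)
      with hcols
    set M : Matrix (Fin ((s+1)+(t+1))) (Fin ((s+1)+(t+1))) (MvPolynomial (Fin n × Fin n) ℂ) :=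
      Matrix.of fun a b => Ygen n (e a) (cols b) with hM
    have hcols_cast : ∀ b : Fin (s+1), cols (Fin.castAdd (t+1) b) = D.orderEmbOfFin hDcard b := by
      intro b; simp [hcols]
    have hcols_nat : ∀ b : Fin (t+1), cols (Fin.natAdd (s+1) b) = P.orderEmbOfFin hPcard b := by
      intro b; simp [hcols]
    -- the two coinciding columns
    have hDlast : D.orderEmbOfFin hDcard (Fin.last s) = i₂ := by
      have hmem : i₂ ∈ Set.range (D.orderEmbOfFin hDcard) := by
        rw [Finset.range_orderEmbOfFin]; exact_mod_cast hi₂D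
      obtain ⟨c, hc⟩ := hmem
      refine le_antisymm (hDhigh _ (Finset.orderEmbOfFin_mem _ _ _)) ?_
      rw [← hc]
      exact (D.orderEmbOfFin hDcard).monotone (Fin.le_last c)
    have hPlast : P.orderEmbOfFin hPcard (Fin.last t) = i₂ := by
      have hmem : i₂ ∈ Set.range (P.orderEmbOfFin hPcard) := by
        rw [Finset.range_orderEmbOfFin]; exact_mod_cast hi₂P
      obtain ⟨c, hc⟩ := hmem
      refine le_antisymm (hPhigh _ (Finset.orderEmbOfFin_mem _ _ _)) ?_
      rw [← hc]
      exact (P.orderEmbOfFin hPcard).monotone (Fin.le_last c)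
    have hMdet : M.det = 0 := by
      refine Matrix.det_zero_of_column_eq
        (i := Fin.castAdd (t+1) (Fin.last s)) (j := Fin.natAdd (s+1) (Fin.last t)) ?_ ?_
      · intro h
        have := congrArg Fin.val h
        simp only [Fin.coe_castAdd, Fin.val_last, Fin.coe_natAdd] at this
        omega
      · intro r
        show Ygen n (e r) (cols (Fin.castAdd (t+1) (Fin.last s))) =
          Ygen n (e r) (cols (Fin.natAdd (s+1) (Fin.last t)))
        rw [hcols_cast, hcols_nat, hDlast, hPlast]
    -- transport between subsets of `Icc` and subsets of `Fin ((s+1)+(t+1))`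
    have hrange : ∀ x : Fin n, x ∈ Finset.Icc i₁ i₂ ↔ ∃ a, e a = x := by
      intro x
      constructor
      · intro hx
        have : x ∈ Set.range e := by rw [he, Finset.range_orderEmbOfFin]; exact_mod_cast hx
        exact this
      · rintro ⟨a, rfl⟩; exact Finset.orderEmbOfFin_mem _ _ _
    have hpull_push : ∀ R' : Finset (Fin ((s+1)+(t+1))),
        (univ.filter (fun a => e a ∈ Finset.map em R')) = R' := by
      intro R'
      ext a
      simp only [Finset.mem_filter, Finset.mem_univ, true_and]
      constructor
      · intro h
        obtain ⟨b, hb, hba⟩ := Finset.mem_map.mp h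
        rwa [← (e.injective (show e b = e a from hba))]
      · intro h
        exact Finset.mem_map.mpr ⟨a, h, rfl⟩
    have hpush_sub : ∀ R' : Finset (Fin ((s+1)+(t+1))),
        Finset.map em R' ⊆ Finset.Icc i₁ i₂ := by
      intro R' x hx
      obtain ⟨b, _, rfl⟩ := Finset.mem_map.mp hx
      exact Finset.orderEmbOfFin_mem _ _ _
    have hpush_pull : ∀ R : Finset (Fin n), R ⊆ Finset.Icc i₁ i₂ →
        Finset.map em (univ.filter (fun a => e a ∈ R)) = R := by
      intro R hR
      ext x
      simp only [Finset.mem_map, Finset.mem_filter, Finset.mem_univ, true_and]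
      constructor
      · rintro ⟨a, ha, rfl⟩; exact ha
      · intro hx
        obtain ⟨a, rfl⟩ := (hrange x).mp (hR hx)
        exact ⟨a, hx, rfl⟩
    have hcompl : ∀ R' : Finset (Fin ((s+1)+(t+1))),
        Finset.Icc i₁ i₂ \ Finset.map em R' = Finset.map em (R'ᶜ) := by
      intro R'
      ext x
      simp only [Finset.mem_sdiff, Finset.mem_map, Finset.mem_compl]
      constructor
      · rintro ⟨hx, hnot⟩
        obtain ⟨a, rfl⟩ := (hrange x).mp hx
        exact ⟨a, fun ha => hnot ⟨a, ha, rfl⟩, rfl⟩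
      · rintro ⟨a, ha, rfl⟩
        refine ⟨Finset.orderEmbOfFin_mem _ _ _, ?_⟩
        rintro ⟨b, hb, hba⟩
        exact ha (e.injective (show e b = e a from hba) ▸ hb)
    -- identification of order embeddings
    have hembpush : ∀ (q : ℕ) (R' : Finset (Fin ((s+1)+(t+1)))) (h' : R'.card = q)
        (hc : (Finset.map em R').card = q) (a : Fin q),
        (Finset.map em R').orderEmbOfFin hc a = e (R'.orderEmbOfFin h' a) := by
      intro q R' h' hc a
      have hmono : StrictMono (fun a : Fin q => e (R'.orderEmbOfFin h' a)) :=
        e.strictMono.comp (R'.orderEmbOfFin h').strictMono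
      have hmem : ∀ a : Fin q, e (R'.orderEmbOfFin h' a) ∈ Finset.map em R' := by
        intro a
        exact Finset.mem_map.mpr ⟨R'.orderEmbOfFin h' a, Finset.orderEmbOfFin_mem _ _ _, rfl⟩
      exact (congrFun (Finset.orderEmbOfFin_unique hc hmem hmono) a).symm
    -- the sign function
    refine ⟨fun R => if h : (univ.filter (fun a => e a ∈ R)).card = s + 1 then
        ((Equiv.Perm.sign (LapAux.rho (univ.filter (fun a => e a ∈ R)) h) : ℤˣ) : ℤ)
      else 1, ?_, ?_⟩
    · intro R
      dsimp only
      by_cases h : (univ.filter (fun a => e a ∈ R)).card = s + 1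
      · rw [dif_pos h]
        rcases Int.units_eq_one_or (Equiv.Perm.sign (LapAux.rho _ h)) with hs | hs <;>
          rw [hs] <;> simp
      · rw [dif_neg h]; left; rfl
    · -- the relation: transport the sum to the Laplace expansion of `M`
      have hlap := LapAux.laplace (k := s+1) (l := t+1) M
      rw [hMdet] at hlap
      -- proof-free form of the Laplace summand
      set F : Finset (Fin ((s+1)+(t+1))) → MvPolynomial (Fin n × Fin n) ℂ := fun R' =>
        ((if h : (univ.filter (fun a => e a ∈ Finset.map em R')).card = s + 1 then
          ((Equiv.Perm.sign (LapAux.rho (univ.filter (fun a => e a ∈ Finset.map em R')) h) : ℤˣ) : ℤ)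
        else 1 : ℤ) : MvPolynomial (Fin n × Fin n) ℂ) *
          (colDet (Finset.map em R') D * colDet (Finset.Icc i₁ i₂ \ Finset.map em R') P)
        with hF
      have hterm : ∀ (R' : Finset (Fin ((s+1)+(t+1))))
          (h : R' ∈ (univ : Finset (Fin ((s+1)+(t+1)))).powersetCard (s+1)),
          ((Equiv.Perm.sign (LapAux.rho R' (LapAux.card_of_mem h)) : ℤ) :
              MvPolynomial (Fin n × Fin n) ℂ) *
            ((Matrix.of fun a b : Fin (s+1) =>
                M (R'.orderEmbOfFin (LapAux.card_of_mem h) a) (Fin.castAdd (t+1) b)).det *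
             (Matrix.of fun a b : Fin (t+1) =>
                M ((R'ᶜ).orderEmbOfFin (LapAux.card_compl_of_card (LapAux.card_of_mem h)) a)
                  (Fin.natAdd (s+1) b)).det) = F R' := by
        intro R' h
        have h' : R'.card = s + 1 := LapAux.card_of_mem h
        have hcpush : (Finset.map em R').card = s + 1 := by rw [Finset.card_map]; exact h'
        have hccompl : (R'ᶜ).card = t + 1 := LapAux.card_compl_of_card h'
        have hcpushc : (Finset.map em (R'ᶜ)).card = t + 1 := by rw [Finset.card_map]; exact hccompl
        rw [hF]
        have hsgn : (if hh : (univ.filter (fun a => e a ∈ Finset.map em R')).card = s + 1 then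
            ((Equiv.Perm.sign (LapAux.rho (univ.filter (fun a => e a ∈ Finset.map em R')) hh) : ℤˣ) : ℤ)
          else 1) = ((Equiv.Perm.sign (LapAux.rho R' h') : ℤˣ) : ℤ) := by
          simp only [hpull_push R']
          rw [dif_pos h']
        have hcd1 : colDet (Finset.map em R') D =
            (Matrix.of fun a b : Fin (s+1) =>
              M (R'.orderEmbOfFin h' a) (Fin.castAdd (t+1) b)).det := by
          rw [LapAux.colDet_eq_of_card hcpush hDcard]
          congr 1
          ext a b
          simp only [Matrix.of_apply, hM]
          rw [hembpush (s+1) R' h' hcpush a, hcols_cast b]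
        have hcd2 : colDet (Finset.Icc i₁ i₂ \ Finset.map em R') P =
            (Matrix.of fun a b : Fin (t+1) =>
              M ((R'ᶜ).orderEmbOfFin hccompl a) (Fin.natAdd (s+1) b)).det := by
          rw [hcompl R', LapAux.colDet_eq_of_card hcpushc hPcard]
          congr 1
          ext a b
          simp only [Matrix.of_apply, hM]
          rw [hembpush (t+1) (R'ᶜ) hccompl hcpushc a, hcols_nat b]
        dsimp only
        rw [hsgn, hcd1, hcd2]
      -- finish
      have hsum : ∑ R ∈ (Finset.Icc i₁ i₂).powersetCard (s + 1),
          ((if h : (univ.filter (fun a => e a ∈ R)).card = s + 1 then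
            ((Equiv.Perm.sign (LapAux.rho (univ.filter (fun a => e a ∈ R)) h) : ℤˣ) : ℤ)
          else 1 : ℤ) : MvPolynomial (Fin n × Fin n) ℂ) *
            (colDet R D * colDet (Finset.Icc i₁ i₂ \ R) P) =
          ∑ R' ∈ (univ : Finset (Fin ((s+1)+(t+1)))).powersetCard (s+1), F R' := by
        refine Finset.sum_nbij' (fun R => univ.filter (fun a => e a ∈ R))
          (fun R' => Finset.map em R') ?_ ?_ ?_ ?_ ?_
        · intro R hR
          obtain ⟨hsub, hcard⟩ := Finset.mem_powersetCard.mp hR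
          refine Finset.mem_powersetCard.mpr ⟨Finset.subset_univ _, ?_⟩
          have := congrArg Finset.card (hpush_pull R hsub)
          rw [Finset.card_map] at this
          rw [this, hcard]
        · intro R' hR'
          obtain ⟨_, hcard⟩ := Finset.mem_powersetCard.mp hR'
          refine Finset.mem_powersetCard.mpr ⟨hpush_sub R', ?_⟩
          rw [Finset.card_map, hcard]
        · intro R hR
          exact hpush_pull R (Finset.mem_powersetCard.mp hR).1
        · intro R' _
          exact hpull_push R'
        · intro R hR
          have hid := hpush_pull R (Finset.mem_powersetCard.mp hR).1
          rw [hF]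
          dsimp only
          rw [hid]
      have hcongr : ∑ x ∈ ((univ : Finset (Fin ((s+1)+(t+1)))).powersetCard (s+1)).attach,
          ((Equiv.Perm.sign (LapAux.rho x.1 (LapAux.card_of_mem x.2)) : ℤ) :
              MvPolynomial (Fin n × Fin n) ℂ) *
            ((Matrix.of fun a b : Fin (s+1) =>
                M (x.1.orderEmbOfFin (LapAux.card_of_mem x.2) a) (Fin.castAdd (t+1) b)).det *
             (Matrix.of fun a b : Fin (t+1) =>
                M ((x.1ᶜ).orderEmbOfFin (LapAux.card_compl_of_card (LapAux.card_of_mem x.2)) a)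
                  (Fin.natAdd (s+1) b)).det) =
          ∑ x ∈ ((univ : Finset (Fin ((s+1)+(t+1)))).powersetCard (s+1)).attach, F x.1 :=
        Finset.sum_congr rfl (fun x _ => hterm x.1 x.2)
      rw [hsum, ← Finset.sum_attach ((univ : Finset (Fin ((s+1)+(t+1)))).powersetCard (s+1)) F,
        ← hcongr]
      exact hlap.symm
end

section
/- Let D be a diagram in [n]×[n] avoiding the configuration of Theorem 1 (no i_1 < i_2, j_1 < j_2 with (i_1,j_1),(i_1,j_2) ∉ D and (i_2,j_1),(i_2,j_2) ∈ D). If C, C' ≤ D are distinct diagrams, then the maximal-weight flagged fillings F_max(C) and F_max(C') of D (with contents C and C' respectively) differ in some box, and moreover if they have the same multiset of entries in every row then there exist a row r, an entry a < r, and columns k ≠ k' such that a appears in box (r,k) of F_max(C) and in box (r,k') of F_max(C'), with (a,k) ∉ D and (a,k') ∉ D. -/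
open Finset

/-- The multiset of entries in row `i` of a flagged filling `F`. -/
def rowEntries {n : ℕ} {D C : Fin n → Finset (Fin n)}
    (F : ∀ j, {x // x ∈ D j} ≃ {x // x ∈ C j}) (i : Fin n) : Multiset (Fin n) :=
  (Finset.univ : Finset (Fin n)).val.bind fun j =>
    if h : i ∈ D j then {(((F j) ⟨i, h⟩ : Fin n))} else 0

/-! If an entry `a < r` sits in box `(r,k)` of a maximal filling while `(a,k)` is a box of `D`,
then box `(a,k)` holds an entry smaller than `a`; exchanging the two entries keeps the filling
flagged and raises row `a` without touching the rows above it, contradicting lexicographic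
maximality.

Since the content of a filling is read off from its entries, `C ≠ C'` gives a box `(r,k)` where
the two maximal fillings differ. Both entries are at most `r`, so one of them, `a`, is below `r`;
if the rows carry the same entries, `a` also occurs in row `r` of the other filling, in a column
`k' ≠ k`, and the first paragraph shows `(a,k), (a,k') ∉ D`. -/

variable {n : ℕ} {D C C' : Fin n → Finset (Fin n)}

theorem LexGT.asymm {f g : Fin n → ℕ} (hfg : LexGT f g) : ¬ LexGT g f := by
  rintro ⟨i', hi', hpi'⟩
  obtain ⟨i, hi, hpi⟩ := hfg
  rcases lt_trichotomy i i' with h | rfl | h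
  · exact absurd (hpi' i h) (by omega)
  · omega
  · exact absurd (hpi i' h) (by omega)

/-- The paper's `F_max(C)`. -/
def IsMaxFlagged (F : ∀ j, {x // x ∈ D j} ≃ {x // x ∈ C j}) : Prop :=
  FlaggedD F ∧ ∀ G : ∀ j, {x // x ∈ D j} ≃ {x // x ∈ C j}, FlaggedD G → G ≠ F →
    LexGT (wt F) (wt G)

theorem content_eq_image (F : ∀ j, {x // x ∈ D j} ≃ {x // x ∈ C j}) (j : Fin n) :
    C j = (D j).attach.image fun d => (F j d : Fin n) := by
  ext z
  simp only [mem_image, mem_attach, true_and]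
  exact ⟨fun hz => ⟨(F j).symm ⟨z, hz⟩, by simp⟩, by rintro ⟨d, rfl⟩; exact (F j d).2⟩

theorem content_eq_of_entries_eq (F : ∀ j, {x // x ∈ D j} ≃ {x // x ∈ C j})
    (F' : ∀ j, {x // x ∈ D j} ≃ {x // x ∈ C' j})
    (h : ∀ j d (hd : d ∈ D j), (F j ⟨d, hd⟩ : Fin n) = F' j ⟨d, hd⟩) : C = C' := by
  funext j
  rw [content_eq_image F j, content_eq_image F' j]
  congr 1
  funext d
  exact h j d d.2

theorem mem_rowEntries (F : ∀ j, {x // x ∈ D j} ≃ {x // x ∈ C j}) (r a : Fin n) :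
    a ∈ rowEntries F r ↔ ∃ k, ∃ hk : r ∈ D k, (F k ⟨r, hk⟩ : Fin n) = a := by
  simp only [rowEntries, Multiset.mem_bind, Finset.mem_val, mem_univ, true_and]
  refine exists_congr fun k => ?_
  split_ifs with hk <;> simp [hk, eq_comm]

theorem lexGT_wt_of_agree_of_increase {F G : ∀ j, {x // x ∈ D j} ≃ {x // x ∈ C j}} (i : Fin n)
    (hagree : ∀ j t (ht : t ∈ D j), t < i → (G j ⟨t, ht⟩ : Fin n) = F j ⟨t, ht⟩)
    (hle : ∀ j (hi : i ∈ D j), (F j ⟨i, hi⟩ : Fin n) ≤ G j ⟨i, hi⟩)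
    (hlt : ∃ j, ∃ hi : i ∈ D j, (F j ⟨i, hi⟩ : Fin n) < G j ⟨i, hi⟩) :
    LexGT (wt G) (wt F) := by
  refine ⟨i, ?_, fun t ht => sum_congr rfl fun j _ => ?_⟩
  · obtain ⟨j, hi, hj⟩ := hlt
    refine sum_lt_sum (fun j _ => ?_) ⟨j, mem_univ j, ?_⟩
    · split_ifs with h
      · have := hle j h
        omega
      · rfl
    · rw [dif_pos hi, dif_pos hi]
      omega
  · split_ifs with h
    · rw [hagree j t h ht]
    · rfl

section swapEntries

def swapEntries (F : ∀ j, {x // x ∈ D j} ≃ {x // x ∈ C j}) {k : Fin n}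
    (d₁ d₂ : {x // x ∈ D k}) : ∀ j, {x // x ∈ D j} ≃ {x // x ∈ C j} :=
  Function.update F k ((Equiv.swap d₁ d₂).trans (F k))

variable (F : ∀ j, {x // x ∈ D j} ≃ {x // x ∈ C j}) {k : Fin n} {d₁ d₂ : {x // x ∈ D k}}

theorem swapEntries_self : swapEntries F d₁ d₂ k = (Equiv.swap d₁ d₂).trans (F k) :=
  Function.update_self k _ F

theorem swapEntries_of_ne {j : Fin n} (hj : j ≠ k) : swapEntries F d₁ d₂ j = F j :=
  Function.update_of_ne hj _ F

theorem FlaggedD.swapEntries {F : ∀ j, {x // x ∈ D j} ≃ {x // x ∈ C j}} (hF : FlaggedD F)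
    (h₁₂ : (d₁ : Fin n) ≤ d₂) (h₂ : (F k d₂ : Fin n) ≤ d₁) :
    FlaggedD (swapEntries F d₁ d₂) := by
  intro j d
  rcases eq_or_ne j k with rfl | hj
  · rw [swapEntries_self, Equiv.trans_apply]
    rcases eq_or_ne d d₁ with rfl | h₁
    · rwa [Equiv.swap_apply_left]
    rcases eq_or_ne d d₂ with rfl | h₂
    · rw [Equiv.swap_apply_right]
      exact (hF j d₁).trans h₁₂
    · rw [Equiv.swap_apply_of_ne_of_ne h₁ h₂]
      exact hF j d
  · rw [swapEntries_of_ne F hj]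
    exact hF j d

theorem lexGT_wt_swapEntries (h₁₂ : (d₁ : Fin n) < d₂)
    (hF : (F k d₁ : Fin n) < F k d₂) : LexGT (wt (swapEntries F d₁ d₂)) (wt F) := by
  refine lexGT_wt_of_agree_of_increase d₁ (fun j t ht htd => ?_) (fun j hi => ?_)
    ⟨k, d₁.2, ?_⟩
  · rcases eq_or_ne j k with rfl | hj
    · rw [swapEntries_self, Equiv.trans_apply, Equiv.swap_apply_of_ne_of_ne
        (Subtype.coe_ne_coe.1 htd.ne) (Subtype.coe_ne_coe.1 (htd.trans h₁₂).ne)]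
    · rw [swapEntries_of_ne F hj]
  · rcases eq_or_ne j k with rfl | hj
    · rw [swapEntries_self, Equiv.trans_apply, Subtype.coe_eta, Equiv.swap_apply_left]
      exact hF.le
    · rw [swapEntries_of_ne F hj]
  · rw [swapEntries_self, Equiv.trans_apply, Subtype.coe_eta, Equiv.swap_apply_left]
    exact hF

end swapEntries

theorem IsMaxFlagged.notMem_of_entry_lt {F : ∀ j, {x // x ∈ D j} ≃ {x // x ∈ C j}}
    (hF : IsMaxFlagged F) {k r a : Fin n} (hr : r ∈ D k) (hval : (F k ⟨r, hr⟩ : Fin n) = a)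
    (har : a < r) : a ∉ D k := by
  intro ha
  let d₁ : {x // x ∈ D k} := ⟨a, ha⟩
  let d₂ : {x // x ∈ D k} := ⟨r, hr⟩
  have hlt : (F k d₁ : Fin n) < F k d₂ := by
    refine lt_of_le_of_ne ((hF.1 k d₁).trans_eq hval.symm) fun h => har.ne ?_
    exact congrArg Subtype.val ((F k).injective (Subtype.ext h))
  have hlex := lexGT_wt_swapEntries F har hlt
  have hne : swapEntries F d₁ d₂ ≠ F := by
    intro h
    rw [h] at hlex
    exact hlex.asymm hlex
  exact hlex.asymm (hF.2 _ (hF.1.swapEntries har.le hval.le) hne)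

theorem exists_shared_entry_of_rowEntries_eq {F : ∀ j, {x // x ∈ D j} ≃ {x // x ∈ C j}}
    {F' : ∀ j, {x // x ∈ D j} ≃ {x // x ∈ C' j}} (hF : IsMaxFlagged F) (hF' : IsMaxFlagged F')
    {r k : Fin n} (hrow : rowEntries F r = rowEntries F' r) (hr : r ∈ D k)
    (hlt : (F k ⟨r, hr⟩ : Fin n) < r) (hne : (F k ⟨r, hr⟩ : Fin n) ≠ F' k ⟨r, hr⟩) :
    ∃ k', k ≠ k' ∧ (∃ hk' : r ∈ D k', (F' k' ⟨r, hk'⟩ : Fin n) = F k ⟨r, hr⟩) ∧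
      (F k ⟨r, hr⟩ : Fin n) ∉ D k ∧ (F k ⟨r, hr⟩ : Fin n) ∉ D k' := by
  obtain ⟨k', hk', hval'⟩ :=
    (mem_rowEntries F' r _).1 (hrow ▸ (mem_rowEntries F r _).2 ⟨k, hr, rfl⟩)
  refine ⟨k', ?_, ⟨hk', hval'⟩, hF.notMem_of_entry_lt hr rfl hlt,
    hF'.notMem_of_entry_lt hk' hval' hlt⟩
  rintro rfl
  exact hne hval'.symm

theorem max_fillings_differ_general {n : ℕ} (D C C' : Fin n → Finset (Fin n))
    (hne : C ≠ C')
    (Fmax : ∀ j, {x // x ∈ D j} ≃ {x // x ∈ C j})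
    (F'max : ∀ j, {x // x ∈ D j} ≃ {x // x ∈ C' j})
    (hflag : FlaggedD Fmax) (hflag' : FlaggedD F'max)
    (hmax : ∀ F : ∀ j, {x // x ∈ D j} ≃ {x // x ∈ C j},
      FlaggedD F → F ≠ Fmax → LexGT (wt Fmax) (wt F))
    (hmax' : ∀ F : ∀ j, {x // x ∈ D j} ≃ {x // x ∈ C' j},
      FlaggedD F → F ≠ F'max → LexGT (wt F'max) (wt F)) :
    (∃ (j : Fin n) (d : Fin n) (hd : d ∈ D j),
        ((Fmax j) ⟨d, hd⟩ : Fin n) ≠ ((F'max j) ⟨d, hd⟩ : Fin n)) ∧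
    ((∀ i : Fin n, rowEntries Fmax i = rowEntries F'max i) →
      ∃ (r a k k' : Fin n), a < r ∧ k ≠ k' ∧
        (∃ hk : r ∈ D k, ((Fmax k) ⟨r, hk⟩ : Fin n) = a) ∧
        (∃ hk' : r ∈ D k', ((F'max k') ⟨r, hk'⟩ : Fin n) = a) ∧
        a ∉ D k ∧ a ∉ D k') := by
  have hdiff : ∃ (j : Fin n) (d : Fin n) (hd : d ∈ D j),
      ((Fmax j) ⟨d, hd⟩ : Fin n) ≠ ((F'max j) ⟨d, hd⟩ : Fin n) := by
    by_contra! h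
    exact hne (content_eq_of_entries_eq Fmax F'max h)
  refine ⟨hdiff, fun hrow => ?_⟩
  obtain ⟨k, r, hr, hxy⟩ := hdiff
  rcases (hflag k ⟨r, hr⟩).lt_or_eq with hx | hx
  · obtain ⟨k', hkk', hk', ha, ha'⟩ :=
      exists_shared_entry_of_rowEntries_eq ⟨hflag, hmax⟩ ⟨hflag', hmax'⟩ (hrow r) hr hx hxy
    exact ⟨r, _, k, k', hx, hkk', ⟨hr, rfl⟩, hk', ha, ha'⟩
  · have hy : (F'max k ⟨r, hr⟩ : Fin n) < r :=
      (hflag' k ⟨r, hr⟩).lt_of_ne fun h => hxy (hx.trans h.symm)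
    obtain ⟨k', hkk', hk', ha, ha'⟩ := exists_shared_entry_of_rowEntries_eq ⟨hflag', hmax'⟩
      ⟨hflag, hmax⟩ (hrow r).symm hr hy (Ne.symm hxy)
    exact ⟨r, _, k', k, hy, hkk'.symm, hk', ⟨hr, rfl⟩, ha', ha⟩

/-- for `D` avoiding the configuration and distinct contents `C ≠ C'`,
the maximal-weight fillings differ in some box; and if they have the same multiset of
entries in every row, there are a row `r`, an entry `a < r` and columns `k ≠ k'` with
`a` in box `(r,k)` of `Fmax` and in box `(r,k')` of `F'max`, and `(a,k),(a,k') ∉ D`. -/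
theorem max_fillings_differ {n : ℕ} (D C C' : Fin n → Finset (Fin n))
    (hav : Avoids D) (hG : ∀ j, Gale (C j) (D j)) (hG' : ∀ j, Gale (C' j) (D j))
    (hne : C ≠ C')
    (Fmax : ∀ j, {x // x ∈ D j} ≃ {x // x ∈ C j})
    (F'max : ∀ j, {x // x ∈ D j} ≃ {x // x ∈ C' j})
    (hflag : FlaggedD Fmax) (hflag' : FlaggedD F'max)
    (hmax : ∀ F : ∀ j, {x // x ∈ D j} ≃ {x // x ∈ C j},
      FlaggedD F → F ≠ Fmax → LexGT (wt Fmax) (wt F))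
    (hmax' : ∀ F : ∀ j, {x // x ∈ D j} ≃ {x // x ∈ C' j},
      FlaggedD F → F ≠ F'max → LexGT (wt F'max) (wt F)) :
    (∃ (j : Fin n) (d : Fin n) (hd : d ∈ D j),
        ((Fmax j) ⟨d, hd⟩ : Fin n) ≠ ((F'max j) ⟨d, hd⟩ : Fin n)) ∧
    ((∀ i : Fin n, rowEntries Fmax i = rowEntries F'max i) →
      ∃ (r a k k' : Fin n), a < r ∧ k ≠ k' ∧
        (∃ hk : r ∈ D k, ((Fmax k) ⟨r, hk⟩ : Fin n) = a) ∧
        (∃ hk' : r ∈ D k', ((F'max k') ⟨r, hk'⟩ : Fin n) = a) ∧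
        a ∉ D k ∧ a ∉ D k') :=
  max_fillings_differ_general D C C' hne Fmax F'max hflag hflag' hmax hmax'
end
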